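/- arXiv:2106.00212 — 6 statements merged into one kernel-verified Lean document; each statement's English description precedes it below -/
import Mathlib

section
/- Let D be a loopless digraph on n vertices with exactly n(n-1)/2 arcs. Then either D is a transitive tournament, or D contains a cycle of length at most 3. -/
/-- A walk of length `k` in the digraph with arc relation `A`,
given as its sequence of `k+1` vertices. -/
def IsWalk {V : Type*} (A : V → V → Prop) {k : ℕ} (w : Fin (k+1) → V) : Prop :=
  ∀ i : Fin k, A (w i.castSucc) (w i.succ)

/-- A walk of length `k` from `u` to `v`. -/
def IsWalkFrom {V : Type*} (A : V → V → Prop) (k : ℕ) (u v : V) (w : Fin (k+1) → V) : Prop :=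
  IsWalk A w ∧ w 0 = u ∧ w (Fin.last k) = v

/-- A (directed) cycle of length `m ≥ 1`: a closed walk whose first `m` vertices are distinct. -/
def IsCycle {V : Type*} (A : V → V → Prop) (m : ℕ) (c : Fin (m+1) → V) : Prop :=
  1 ≤ m ∧ IsWalk A c ∧ c (Fin.last m) = c 0 ∧
    Function.Injective (fun i : Fin m => c i.castSucc)

/-- There exist at least `s` pairwise distinct walks of length `k` from `u` to `v`. -/
def HasWalks {V : Type*} (A : V → V → Prop) (k s : ℕ) (u v : V) : Prop :=
  ∃ f : Fin s → (Fin (k+1) → V), Function.Injective f ∧ ∀ i, IsWalkFrom A k u v (f i)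

lemma cycle2 {V : Type*} (A : V → V → Prop) (u v : V) (h1 : A u v) (h2 : A v u)
    (hne : u ≠ v) : IsCycle A 2 ![u, v, u] := by
  refine ⟨by norm_num, ?_, by simp [Fin.last], ?_⟩
  · intro i
    fin_cases i <;> simpa
  · have hc : (fun i : Fin 2 => (![u, v, u] : Fin 3 → V) i.castSucc) = ![u, v] := by
      funext i; fin_cases i <;> rfl
    rw [hc]
    intro i j hij
    fin_cases i <;> fin_cases j <;> simp at hij <;> simp_all

lemma cycle3 {V : Type*} (A : V → V → Prop) (u v w : V) (h1 : A u v) (h2 : A v w)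
    (h3 : A w u) (huv : u ≠ v) (hvw : v ≠ w) (hwu : w ≠ u) : IsCycle A 3 ![u, v, w, u] := by
  refine ⟨by norm_num, ?_, by simp [Fin.last], ?_⟩
  · intro i
    fin_cases i <;> simpa
  · have hc : (fun i : Fin 3 => (![u, v, w, u] : Fin 4 → V) i.castSucc) = ![u, v, w] := by
      funext i; fin_cases i <;> rfl
    rw [hc]
    intro i j hij
    fin_cases i <;> fin_cases j <;> simp at hij <;> simp_all

/-- A loopless digraph on `n` vertices with `n(n-1)/2` arcs is a transitive
tournament or has girth at most 3. -/
theorem stmt_3 (n : ℕ) (A : Finset (Fin n × Fin n))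
    (hloop : ∀ v : Fin n, (v, v) ∉ A)
    (hcard : A.card = n * (n - 1) / 2) :
    (∃ e : Fin n ≃ Fin n, ∀ u v : Fin n, (u, v) ∈ A ↔ e u < e v) ∨
    (∃ (m : ℕ) (c : Fin (m+1) → Fin n), m ≤ 3 ∧ IsCycle (fun x y => (x, y) ∈ A) m c) := by
  classical
  by_cases h2 : ∃ u v : Fin n, (u, v) ∈ A ∧ (v, u) ∈ A
  · obtain ⟨u, v, ha, hb⟩ := h2
    have hne : u ≠ v := fun h => hloop u (h ▸ ha)
    exact Or.inr ⟨2, ![u, v, u], by norm_num, cycle2 _ u v ha hb hne⟩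
  push_neg at h2
  -- no 2-cycles, so A is asymmetric; counting gives totality
  have hne_mem : ∀ p ∈ A, p.1 ≠ p.2 := by
    rintro ⟨a, b⟩ hp h
    simp only at h
    subst h
    exact hloop a hp
  have htot : ∀ u v : Fin n, u ≠ v → (u, v) ∈ A ∨ (v, u) ∈ A := by
    have hinj : Set.InjOn (fun p : Fin n × Fin n => s(p.1, p.2)) A := by
      rintro ⟨a, b⟩ ha ⟨c, d⟩ hc hcd
      simp only [Sym2.eq_iff] at hcd
      rcases hcd with ⟨rfl, rfl⟩ | ⟨rfl, rfl⟩
      · rfl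
      · exact absurd hc (h2 _ _ ha)
    set S : Finset (Sym2 (Fin n)) := A.image (fun p => s(p.1, p.2)) with hS
    have hScard : S.card = n * (n - 1) / 2 := by
      rw [hS, Finset.card_image_of_injOn hinj, hcard]
    set ND : Finset (Sym2 (Fin n)) := Finset.univ.filter (fun z => ¬ z.IsDiag) with hND
    have hNDcard : ND.card = n * (n - 1) / 2 := by
      have h' : ND.card = Fintype.card {z : Sym2 (Fin n) // ¬ z.IsDiag} := by
        rw [Fintype.card_subtype]
      rw [h', Sym2.card_subtype_not_diag, Fintype.card_fin, Nat.choose_two_right]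
    have hsub : S ⊆ ND := by
      intro z hz
      rw [hS, Finset.mem_image] at hz
      obtain ⟨p, hp, rfl⟩ := hz
      simp only [hND, Finset.mem_filter, Finset.mem_univ, true_and, Sym2.mk_isDiag_iff]
      exact hne_mem p hp
    have hSeq : S = ND := Finset.eq_of_subset_of_card_le hsub (by omega)
    intro u v huv
    have hmem : s(u, v) ∈ S := by
      rw [hSeq, hND]
      simp [huv]
    rw [hS, Finset.mem_image] at hmem
    obtain ⟨⟨a, b⟩, hp, hq⟩ := hmem
    simp only [Sym2.eq_iff] at hq
    rcases hq with ⟨rfl, rfl⟩ | ⟨rfl, rfl⟩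
    · exact Or.inl hp
    · exact Or.inr hp
  by_cases h3 : ∃ u v w : Fin n, (u, v) ∈ A ∧ (v, w) ∈ A ∧ (w, u) ∈ A
  · obtain ⟨u, v, w, ha, hb, hc⟩ := h3
    have huv : u ≠ v := fun h => hloop u (h ▸ ha)
    have hvw : v ≠ w := fun h => hloop v (h ▸ hb)
    have hwu : w ≠ u := fun h => hloop w (h ▸ hc)
    exact Or.inr ⟨3, ![u, v, w, u], le_refl 3, cycle3 _ u v w ha hb hc huv hvw hwu⟩
  push_neg at h3
  -- transitivity
  have htrans : ∀ u v w : Fin n, (u, v) ∈ A → (v, w) ∈ A → (u, w) ∈ A := by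
    intro u v w hA hB
    by_cases huw : u = w
    · subst huw
      exact absurd hB (h2 _ _ hA)
    rcases htot u w huw with h | h
    · exact h
    · exact absurd h (h3 u v w hA hB)
  -- the in-degree function is a strictly monotone bijection onto Fin n
  set d : Fin n → ℕ := fun u => (Finset.univ.filter fun v => (v, u) ∈ A).card with hd
  have hdlt : ∀ u, d u < n := by
    intro u
    have hsub : (Finset.univ.filter fun v => (v, u) ∈ A) ⊆ Finset.univ.erase u := by
      intro x hx
      simp only [Finset.mem_filter] at hx
      exact Finset.mem_erase.mpr ⟨fun h => hloop u (h ▸ hx.2), Finset.mem_univ x⟩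
    have h1 := Finset.card_le_card hsub
    rw [Finset.card_erase_of_mem (Finset.mem_univ u), Finset.card_univ, Fintype.card_fin] at h1
    have hn : 0 < n := Fin.pos u
    simp only [hd]
    omega
  have hmono : ∀ u v : Fin n, (u, v) ∈ A → d u < d v := by
    intro u v h
    have hsub : insert u (Finset.univ.filter fun w => (w, u) ∈ A) ⊆
        Finset.univ.filter fun w => (w, v) ∈ A := by
      intro x hx
      rcases Finset.mem_insert.mp hx with rfl | hx
      · simp [h]
      · simp only [Finset.mem_filter, Finset.mem_univ, true_and] at hx ⊢
        exact htrans _ _ _ hx h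
    have hu : u ∉ Finset.univ.filter fun w => (w, u) ∈ A := by
      simp [hloop u]
    have hle := Finset.card_le_card hsub
    rw [Finset.card_insert_of_notMem hu] at hle
    simp only [hd]
    omega
  set f : Fin n → Fin n := fun u => ⟨d u, hdlt u⟩ with hf
  have hfinj : Function.Injective f := by
    intro u v h
    by_contra hne
    have hdeq : d u = d v := congrArg Fin.val h
    rcases htot u v hne with h' | h'
    · have := hmono _ _ h'; omega
    · have := hmono _ _ h'; omega
  have hbij : Function.Bijective f := Finite.injective_iff_bijective.mp hfinj
  refine Or.inl ⟨Equiv.ofBijective f hbij, fun u v => ?_⟩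
  constructor
  · intro h
    exact hmono u v h
  · intro h
    have hdlt' : d u < d v := h
    by_cases hne : u = v
    · subst hne; omega
    rcases htot u v hne with h' | h'
    · exact h'
    · have := hmono _ _ h'; omega
end

section
/- Let D be a digraph on n vertices such that for all vertices u, v there are at most t+1−1 = t distinct walks of length k from u to v, where k ≥ 2·⌈log₂(t+1)⌉. Then every vertex u satisfies d(u) ≤ n, where d(u) is the number of arcs incident with u (a loop counted once). -/
/-- Number of arcs incident with `u` (a loop at `u` counts once). -/
def deg {n : ℕ} (A : Finset (Fin n × Fin n)) (u : Fin n) : ℕ :=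
  (A.filter (fun p => p.1 = u ∨ p.2 = u)).card

lemma key_lemma (n k t : ℕ) (ht : 1 ≤ t) (hk : 2 * Nat.clog 2 (t+1) ≤ k)
    (A : Finset (Fin n × Fin n))
    (hfree : ∀ u v : Fin n, ¬ HasWalks (fun x y => (x, y) ∈ A) k (t+1) u v)
    (u a b : Fin n) (hab : a ≠ b)
    (h1 : (u,a) ∈ A) (h2 : (u,b) ∈ A) (h3 : (a,u) ∈ A) (h4 : (b,u) ∈ A) : False := by
  classical
  set m := Nat.clog 2 (t+1) with hm
  have hpow : t + 1 ≤ 2 ^ m := Nat.le_pow_clog (by norm_num) _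
  have hmpos : 0 < m := Nat.clog_pos (by norm_num) (by omega)
  have h2m : 2 * m ≤ k := hk
  set v : Fin n := if k % 2 = 0 then u else a with hv
  apply hfree u v
  refine ⟨fun i p => if p.val % 2 = 0 then u
      else if p.val < 2*m ∧ Nat.testBit i.val (p.val / 2) then b else a, ?_, ?_⟩
  · intro i i' h
    apply Fin.ext
    apply Nat.eq_of_testBit_eq
    intro j
    by_cases hjm : j < m
    · have hlt : 2*j+1 < k+1 := by omega
      have := congrFun h ⟨2*j+1, hlt⟩
      simp only at this
      have hmod : (2*j+1) % 2 = 1 := by omega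
      have hdiv : (2*j+1) / 2 = j := by omega
      have hlt2 : 2*j+1 < 2*m := by omega
      rw [hmod] at this
      simp only [hdiv, hlt2, true_and] at this
      rcases Bool.eq_false_or_eq_true (Nat.testBit i.val j) with hb1 | hb1 <;>
      rcases Bool.eq_false_or_eq_true (Nat.testBit i'.val j) with hb2 | hb2 <;>
        simp [hb1, hb2] at this ⊢ <;> exact absurd this (by simp [hab, hab.symm])
    · have hij : i.val < 2 ^ j := lt_of_lt_of_le (lt_of_lt_of_le i.isLt hpow)
        (Nat.pow_le_pow_right (by norm_num) (by omega))
      have hij' : i'.val < 2 ^ j := lt_of_lt_of_le (lt_of_lt_of_le i'.isLt hpow)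
        (Nat.pow_le_pow_right (by norm_num) (by omega))
      rw [Nat.testBit_lt_two_pow hij, Nat.testBit_lt_two_pow hij']
  · intro i
    refine ⟨?_, ?_, ?_⟩
    · intro j
      simp only
      have hc : (j.castSucc : Fin (k+1)).val = j.val := rfl
      have hs : (j.succ : Fin (k+1)).val = j.val + 1 := rfl
      rw [hc, hs]
      by_cases hj : j.val % 2 = 0
      · have hj1 : (j.val + 1) % 2 = 1 := by omega
        rw [if_pos hj, if_neg (by omega)]
        split <;> assumption
      · have hj1 : (j.val + 1) % 2 = 0 := by omega
        rw [if_neg hj, if_pos hj1]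
        split <;> assumption
    · simp
    · simp only [Fin.val_last]
      by_cases hke : k % 2 = 0
      · rw [if_pos hke, hv, if_pos hke]
      · rw [if_neg hke, if_neg (by omega : ¬(k < 2*m ∧ Nat.testBit i.val (k/2))), hv, if_neg hke]

/-- In an `F_{k,t+1}`-free digraph with `k ≥ 2⌈log₂(t+1)⌉`, every vertex has
at most `n` incident arcs. -/
theorem stmt_6 (n k t : ℕ) (ht : 1 ≤ t) (hk : 2 * Nat.clog 2 (t+1) ≤ k)
    (A : Finset (Fin n × Fin n))
    (hfree : ∀ u v : Fin n, ¬ HasWalks (fun x y => (x, y) ∈ A) k (t+1) u v)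
    (u : Fin n) :
    deg A u ≤ n := by
  have key : ∀ a b : Fin n, a ≠ b → (u,a) ∈ A → (u,b) ∈ A → (a,u) ∈ A → (b,u) ∈ A → False :=
    fun a b => key_lemma n k t ht hk A hfree u a b
  classical
  set Np := Finset.univ.filter (fun w : Fin n => (u,w) ∈ A) with hNp
  set Nm := Finset.univ.filter (fun w : Fin n => (w,u) ∈ A ∧ w ≠ u) with hNm
  have hOut : (A.filter (fun p => p.1 = u)).card = Np.card := by
    rw [hNp]
    apply Finset.card_bij (fun p _ => p.2)
    · intro p hp; simp only [Finset.mem_filter] at hp ⊢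
      exact ⟨Finset.mem_univ _, by rw [← hp.2]; exact hp.1⟩
    · intro p hp q hq h
      simp only [Finset.mem_filter] at hp hq
      exact Prod.ext (hp.2.trans hq.2.symm) h
    · intro w hw; simp only [Finset.mem_filter] at hw
      exact ⟨(u, w), Finset.mem_filter.mpr ⟨hw.2, rfl⟩, rfl⟩
  have hIn : (A.filter (fun p => p.2 = u ∧ p.1 ≠ u)).card = Nm.card := by
    rw [hNm]
    apply Finset.card_bij (fun p _ => p.1)
    · intro p hp; simp only [Finset.mem_filter] at hp ⊢
      exact ⟨Finset.mem_univ _, by rw [← hp.2.1]; exact hp.1, hp.2.2⟩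
    · intro p hp q hq h
      simp only [Finset.mem_filter] at hp hq
      exact Prod.ext h (hp.2.1.trans hq.2.1.symm)
    · intro w hw; simp only [Finset.mem_filter] at hw
      exact ⟨(w, u), Finset.mem_filter.mpr ⟨hw.2.1, rfl, hw.2.2⟩, rfl⟩
  have step1 : deg A u ≤ Np.card + Nm.card := by
    rw [← hOut, ← hIn, deg]
    calc (A.filter (fun p => p.1 = u ∨ p.2 = u)).card
        ≤ ((A.filter (fun p => p.1 = u)) ∪ (A.filter (fun p => p.2 = u ∧ p.1 ≠ u))).card := by
          apply Finset.card_le_card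
          intro p hp
          simp only [Finset.mem_filter, Finset.mem_union] at hp ⊢
          by_cases h : p.1 = u
          · exact Or.inl ⟨hp.1, h⟩
          · exact Or.inr ⟨hp.1, hp.2.resolve_left h, h⟩
      _ ≤ _ := Finset.card_union_le _ _
  have step2 : Np.card + Nm.card ≤ n := by
    rw [← Finset.card_union_add_card_inter]
    rcases Finset.eq_empty_or_nonempty (Np ∩ Nm) with he | ⟨w, hw⟩
    · rw [he]
      simpa using (Finset.card_le_univ (Np ∪ Nm)).trans (by simp)
    · simp only [Finset.mem_inter, hNp, hNm, Finset.mem_filter, Finset.mem_univ,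
        true_and] at hw
      obtain ⟨hwA, hwA', hwne⟩ := hw
      have hnoloop : (u, u) ∉ A := fun hl => key w u hwne hwA hl hwA' hl
      have hsub : Np ∪ Nm ⊆ Finset.univ.erase u := by
        intro x hx
        rw [Finset.mem_erase]
        refine ⟨?_, Finset.mem_univ _⟩
        simp only [Finset.mem_union, hNp, hNm, Finset.mem_filter, Finset.mem_univ,
          true_and] at hx
        rcases hx with hx | hx
        · rintro rfl; exact hnoloop hx
        · exact hx.2
      have hcard1 : (Np ∪ Nm).card ≤ n - 1 := by
        calc (Np ∪ Nm).card ≤ (Finset.univ.erase u).card := Finset.card_le_card hsub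
          _ = n - 1 := by rw [Finset.card_erase_of_mem (Finset.mem_univ u)]; simp
      have hcard2 : (Np ∩ Nm).card ≤ 1 := by
        rw [Finset.card_le_one]
        intro x hx y hy
        by_contra hxy
        simp only [Finset.mem_inter, hNp, hNm, Finset.mem_filter, Finset.mem_univ,
          true_and] at hx hy
        exact key x y hxy hx.1 hy.1 hx.2.1 hy.2.1
      have hn : 1 ≤ n := u.pos
      omega
  omega
end

section
/- Let D be a digraph containing a cycle C and a transitive tournament T on a vertex set disjoint from C, with |V(T)| ≥ 2⌈√(2t+9/4)+1/2⌉+1, such that between every vertex of C and every vertex of T there is at least one arc (in some direction). Then for every k ≥ max{t+1, 3⌈log₂(t+1)⌉} there exist vertices u, v of D and at least t+1 distinct walks of length k from u to v. -/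
/-!
Unroll the cycle into a periodic infinite walk `w` and let `p = ⌈√(2t+9/4)+1/2⌉`, so that
`t + 1 ≤ C(p, 2)` and the tournament `g 0 → ⋯ → g (m-1)` has `m ≥ 2p + 1` vertices.
If `k + 2 ≤ m`, dropping one of `g 1, …, g k` gives `k` paths from `g 0` to `g (k+1)`.
Otherwise `k ≥ 2p`. If some `w n` has an out-neighbour `g j` and an in-neighbour `g j'` with
`j + 2 ≤ j'`, then `g (j+1)` gives two distinct closed 3-walks through `w n`; chaining `k / 3` of
them freely and finishing along `w` gives `2 ^ (k/3)` walks. If not, `w n → g j` forces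
`w n → g j'` for all `j' ≥ j + 2`. When every `w n` absorbs `g 0, …, g (p-1)`, climb through any
subset of these and continue along `w`; dually when every `w n` dominates the top `p` vertices.
Failing both, periodicity yields `d` such that `w d` absorbs the bottom `p` vertices while
`w (d+1) → g a` for some `a < p`. Then climb the tournament to `w d`, turn around the triangle
`w d → w (d+1) → g a → w d` to fix the length modulo 3, and climb from `w (d+1)` to the top,
choosing `N ∈ {2, 3, 4}` tournament vertices out of at least `2p - 1`.
-/

section

open Finset

variable {V : Type*} {A : V → V → Prop}

def IsWalkList (A : V → V → Prop) (k : ℕ) (u v : V) (l : List V) : Prop :=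
  l.length = k + 1 ∧ l.IsChain A ∧ l.head? = some u ∧ l.getLast? = some v

namespace IsWalkList

lemma singleton (u : V) : IsWalkList A 0 u u [u] := by
  simp [IsWalkList]

lemma triple {x y z : V} (hxy : A x y) (hyz : A y z) : IsWalkList A 2 x z [x, y, z] := by
  simp [IsWalkList, hxy, hyz]

lemma append {a b : ℕ} {u x y v : V} {l₁ l₂ : List V} (h₁ : IsWalkList A a u x l₁)
    (h₂ : IsWalkList A b y v l₂) (hxy : A x y) : IsWalkList A (a + b + 1) u v (l₁ ++ l₂) := by
  obtain ⟨hl₁, hc₁, hu₁, hx₁⟩ := h₁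
  obtain ⟨hl₂, hc₂, hy₂, hv₂⟩ := h₂
  refine ⟨by simp [hl₁, hl₂]; ring, List.isChain_append.2 ⟨hc₁, hc₂, ?_⟩, ?_, ?_⟩
  · simp_all
  · simp [List.head?_append, hu₁]
  · simp [List.getLast?_append, hv₂]

lemma isWalkFrom {k : ℕ} {u v : V} {l : List V} (h : IsWalkList A k u v l) :
    IsWalkFrom A k u v (fun i => l.getD i u) := by
  obtain ⟨hl, hc, hu, hv⟩ := h
  refine ⟨fun i => ?_, ?_, ?_⟩
  · have := List.isChain_iff_getElem.1 hc i (by omega)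
    simpa [List.getElem?_eq_getElem (show (i : ℕ) < l.length by omega),
      List.getElem?_eq_getElem (show (i : ℕ) + 1 < l.length by omega)] using this
  · simp [List.getD_eq_getElem?_getD, ← List.head?_eq_getElem?, hu]
  · rw [List.getLast?_eq_getElem?, hl, Nat.add_sub_cancel] at hv
    simp [hv]

end IsWalkList

lemma hasWalks_of_finset {k : ℕ} {u v : V} (F : Finset (List V))
    (hF : ∀ l ∈ F, IsWalkList A k u v l) : HasWalks A k #F u v := by
  refine ⟨fun i j => (F.equivFin.symm i : List V).getD j u, fun i i' h => ?_,
    fun i => (hF _ (F.equivFin.symm i).2).isWalkFrom⟩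
  apply F.equivFin.symm.injective
  apply Subtype.ext
  have hl := (hF _ (F.equivFin.symm i).2).1
  have hl' := (hF _ (F.equivFin.symm i').2).1
  refine List.ext_getElem (by rw [hl, hl']) fun j hj hj' => ?_
  have := congrFun h ⟨j, by omega⟩
  simpa [List.getElem?_eq_getElem hj, List.getElem?_eq_getElem hj'] using this

lemma HasWalks.mono {k s s' : ℕ} {u v : V} (h : HasWalks A k s u v) (hs : s' ≤ s) :
    HasWalks A k s' u v := by
  obtain ⟨f, hf, hw⟩ := h
  exact ⟨f ∘ Fin.castLE hs, hf.comp (Fin.castLE_injective hs), fun i => hw _⟩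

lemma List.append_inj_of_forall_of_not_head {α : Type*} (p : α → Prop)
    {l₁ l₂ l₁' l₂' : List α} (h₁ : ∀ x ∈ l₁, p x) (h₁' : ∀ x ∈ l₁', p x)
    (h₂ : ∀ x ∈ l₂.head?, ¬ p x) (h₂' : ∀ x ∈ l₂'.head?, ¬ p x)
    (h : l₁ ++ l₂ = l₁' ++ l₂') : l₁ = l₁' ∧ l₂ = l₂' := by
  classical
  have takeWhile_eq : ∀ {l l' : List α}, (∀ x ∈ l, p x) → (∀ x ∈ l'.head?, ¬ p x) →
      (l ++ l').takeWhile (fun x => decide (p x)) = l := by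
    intro l l' hl hl'
    rw [List.takeWhile_append_of_pos (by simpa using hl)]
    cases l' with
    | nil => simp
    | cons y l' => simp [hl' y rfl]
  have hl : l₁ = l₁' := by
    rw [← takeWhile_eq h₁ h₂, ← takeWhile_eq h₁' h₂', h]
  exact ⟨hl, List.append_cancel_left (hl ▸ h)⟩

section InfiniteWalk

variable {w : ℕ → V}

def walkSegment (w : ℕ → V) (o r : ℕ) : List V := (List.range' o (r + 1)).map w

lemma isWalkList_walkSegment (hw : ∀ n, A (w n) (w (n + 1))) (o r : ℕ) :
    IsWalkList A r (w o) (w (o + r)) (walkSegment w o r) := by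
  refine ⟨by simp [walkSegment], ?_, by simp [walkSegment, List.range'_succ], ?_⟩
  · rw [walkSegment, List.isChain_map]
    exact (List.isChain_range' o (r + 1) 1).imp fun a b (h : b = a + 1) => h ▸ hw a
  · simp [walkSegment, List.getLast?_map, List.getLast?_range']

lemma mem_range_of_mem_walkSegment {o r : ℕ} {x : V} (h : x ∈ walkSegment w o r) :
    x ∈ Set.range w := by
  obtain ⟨n, -, rfl⟩ := List.mem_map.1 h
  exact ⟨n, rfl⟩

end InfiniteWalk

section TourPath

variable {α : Type*} [LinearOrder α] {g : α → V}

def tourPath (g : α → V) (S : Finset α) : List V := (S.sort (· ≤ ·)).map g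

lemma length_tourPath (S : Finset α) : (tourPath g S).length = #S := by
  simp [tourPath]

lemma mem_tourPath {S : Finset α} {x : V} : x ∈ tourPath g S ↔ ∃ j ∈ S, g j = x := by
  simp [tourPath]

lemma mem_range_of_mem_tourPath {S : Finset α} {x : V} (h : x ∈ tourPath g S) :
    x ∈ Set.range g :=
  let ⟨j, _, hj⟩ := mem_tourPath.1 h; ⟨j, hj⟩

lemma isChain_tourPath (hT : ∀ i j, i < j → A (g i) (g j)) (S : Finset α) :
    (tourPath g S).IsChain A := by
  rw [tourPath, List.isChain_map]
  exact (S.sortedLT_sort.pairwise.imp (hT _ _)).isChain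

lemma tourPath_injective (hg : Function.Injective g) : Function.Injective (tourPath g) := by
  intro S S' h
  rw [← S.sort_toFinset (· ≤ ·), ← S'.sort_toFinset (· ≤ ·),
    List.map_injective_iff.2 hg h]

lemma exists_isWalkList_cons_tourPath (hT : ∀ i j, i < j → A (g i) (g j)) {u : α}
    {S : Finset α} (hS : ∀ j ∈ S, u < j) :
    ∃ j ∈ insert u S, IsWalkList A #S (g u) (g j) (g u :: tourPath g S) := by
  obtain ⟨x, hx⟩ : ∃ x, (g u :: tourPath g S).getLast? = some x :=
    Option.isSome_iff_exists.1 (by simp)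
  obtain ⟨j, hj, rfl⟩ : ∃ j ∈ insert u S, g j = x := by
    rcases List.mem_cons.1 (List.mem_of_mem_getLast? hx) with rfl | hx
    · exact ⟨u, mem_insert_self u S, rfl⟩
    · obtain ⟨j, hj, rfl⟩ := mem_tourPath.1 hx
      exact ⟨j, mem_insert_of_mem hj, rfl⟩
  refine ⟨j, hj, by simp [length_tourPath], List.isChain_cons.2 ⟨?_, isChain_tourPath hT S⟩,
    rfl, hx⟩
  intro y hy
  obtain ⟨i, hi, rfl⟩ := mem_tourPath.1 (List.mem_of_mem_head? hy)
  exact hT _ _ (hS i hi)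

lemma exists_isWalkList_tourPath_concat (hT : ∀ i j, i < j → A (g i) (g j)) {v : α}
    {S : Finset α} (hS : ∀ j ∈ S, j < v) :
    ∃ j ∈ insert v S, IsWalkList A #S (g j) (g v) (tourPath g S ++ [g v]) := by
  obtain ⟨x, hx⟩ : ∃ x, (tourPath g S ++ [g v]).head? = some x := by simp
  obtain ⟨j, hj, rfl⟩ : ∃ j ∈ insert v S, g j = x := by
    rcases List.mem_append.1 (List.mem_of_mem_head? hx) with hx | hx
    · obtain ⟨j, hj, rfl⟩ := mem_tourPath.1 hx
      exact ⟨j, mem_insert_of_mem hj, rfl⟩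
    · exact ⟨v, mem_insert_self v S, (List.mem_singleton.1 hx).symm⟩
  refine ⟨j, hj, by simp [length_tourPath],
    List.isChain_append.2 ⟨isChain_tourPath hT S, List.isChain_singleton _, ?_⟩, hx, by simp⟩
  intro y hy z hz
  obtain ⟨i, hi, rfl⟩ := mem_tourPath.1 (List.mem_of_mem_getLast? hy)
  obtain rfl : g v = z := by simpa using hz
  exact hT _ _ (hS i hi)

end TourPath

section Loops

variable {β : Type*} {loop : β → List V}

lemma isWalkList_flatMap_append {ℓ r : ℕ} {x v : V}
    (hloop : ∀ b, ∃ y, IsWalkList A ℓ x y (loop b) ∧ A y x) {R : List V}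
    (hR : IsWalkList A r x v R) :
    ∀ bs : List β, IsWalkList A ((ℓ + 1) * bs.length + r) x v (bs.flatMap loop ++ R)
  | [] => by simpa using hR
  | b :: bs => by
    obtain ⟨y, hb, hyx⟩ := hloop b
    rw [List.flatMap_cons, List.append_assoc]
    convert hb.append (isWalkList_flatMap_append hloop hR bs) hyx using 1
    simp only [List.length_cons]
    ring

lemma eq_of_flatMap_eq (hloop : Function.Injective loop)
    (hlen : ∀ b b', (loop b).length = (loop b').length) :
    ∀ {bs bs' : List β}, bs.length = bs'.length → bs.flatMap loop = bs'.flatMap loop → bs = bs'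
  | [], [], _, _ => rfl
  | b :: bs, b' :: bs', hl, h => by
    rw [List.flatMap_cons, List.flatMap_cons] at h
    obtain ⟨hb, h⟩ := List.append_inj h (hlen b b')
    rw [hloop hb, eq_of_flatMap_eq hloop hlen (Nat.succ_injective hl) h]

lemma hasWalks_pow_of_injective_loops [Fintype β] {w : ℕ → V}
    (hw : ∀ n, A (w n) (w (n + 1))) (hinj : Function.Injective loop) {ℓ n : ℕ}
    (hloop : ∀ b, ∃ y, IsWalkList A ℓ (w n) y (loop b) ∧ A y (w n)) (q r : ℕ) :
    HasWalks A ((ℓ + 1) * q + r) (Fintype.card β ^ q) (w n) (w (n + r)) := by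
  classical
  have hlen (b b' : β) : (loop b).length = (loop b').length := by
    obtain ⟨_, hb, _⟩ := hloop b
    obtain ⟨_, hb', _⟩ := hloop b'
    rw [hb.1, hb'.1]
  have hL : Function.Injective
      fun bs : Fin q → β => (List.ofFn bs).flatMap loop ++ walkSegment w n r := fun bs bs' h =>
    List.ofFn_injective (eq_of_flatMap_eq hinj hlen (by simp) (List.append_cancel_right h))
  have hcard : Fintype.card β ^ q = #(univ.image fun bs : Fin q → β =>
      (List.ofFn bs).flatMap loop ++ walkSegment w n r) := by
    simp [card_image_of_injective _ hL]
  rw [hcard]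
  refine hasWalks_of_finset _ fun l hl => ?_
  obtain ⟨bs, -, rfl⟩ := mem_image.1 hl
  simpa using isWalkList_flatMap_append hloop (isWalkList_walkSegment hw n r) (List.ofFn bs)

end Loops

section Families

variable {α : Type*} [LinearOrder α] {g : α → V} {w : ℕ → V}

lemma hasWalks_tourPath (hT : ∀ i j, i < j → A (g i) (g j)) (hg : Function.Injective g)
    {u v : α} (huv : u < v) {B : Finset α} (hB : ∀ j ∈ B, u < j ∧ j < v) {k : ℕ} (hk : 1 ≤ k) :
    HasWalks A k ((#B).choose (k - 1)) (g u) (g v) := by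
  classical
  have hL : Function.Injective fun S => (g u :: tourPath g S) ++ [g v] :=
    fun S S' h => tourPath_injective hg (List.cons_injective (List.append_cancel_right h))
  rw [← card_powersetCard, ← card_image_of_injective _ hL]
  refine hasWalks_of_finset _ fun l hl => ?_
  obtain ⟨S, hS, rfl⟩ := mem_image.1 hl
  obtain ⟨hSB, hSk⟩ := mem_powersetCard.1 hS
  obtain ⟨j, hj, hpre⟩ := exists_isWalkList_cons_tourPath hT fun i hi => (hB i (hSB hi)).1
  have hjv : j < v := by
    rcases mem_insert.1 hj with rfl | hj
    exacts [huv, (hB j (hSB hj)).2]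
  convert hpre.append (IsWalkList.singleton (g v)) (hT _ _ hjv) using 1
  omega

lemma hasWalks_sink (hT : ∀ i j, i < j → A (g i) (g j)) (hg : Function.Injective g)
    (hw : ∀ n, A (w n) (w (n + 1))) (hdisj : Disjoint (Set.range g) (Set.range w))
    {u : α} {B : Finset α} (hB : ∀ j ∈ B, u < j) (hsink : ∀ j ∈ insert u B, ∀ n, A (g j) (w n))
    {k : ℕ} (hk : #B < k) :
    HasWalks A k (2 ^ #B) (g u) (w k) := by
  classical
  have hpre (S : Finset α) : ∀ x ∈ g u :: tourPath g S, x ∈ Set.range g :=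
    List.forall_mem_cons.2 ⟨⟨u, rfl⟩, fun _ => mem_range_of_mem_tourPath⟩
  have hseg (o r : ℕ) : ∀ x ∈ (walkSegment w o r).head?, x ∉ Set.range g := fun _ hx =>
    Set.disjoint_right.1 hdisj (mem_range_of_mem_walkSegment (List.mem_of_mem_head? hx))
  have hL : Function.Injective
      fun S => (g u :: tourPath g S) ++ walkSegment w (#S + 1) (k - #S - 1) := fun S S' h =>
    tourPath_injective hg <| List.cons_injective
      (List.append_inj_of_forall_of_not_head _ (hpre S) (hpre S') (hseg _ _) (hseg _ _) h).1
  rw [← card_powerset, ← card_image_of_injective _ hL]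
  refine hasWalks_of_finset _ fun l hl => ?_
  obtain ⟨S, hS, rfl⟩ := mem_image.1 hl
  have hSB := mem_powerset.1 hS
  obtain ⟨j, hj, hpre⟩ := exists_isWalkList_cons_tourPath hT fun i hi => hB i (hSB hi)
  have hseg := isWalkList_walkSegment hw (#S + 1) (k - #S - 1)
  have hSk : #S < k := (card_le_card hSB).trans_lt hk
  rw [show #S + 1 + (k - #S - 1) = k by omega] at hseg
  convert hpre.append hseg (hsink j (insert_subset_insert u hSB hj) _) using 1
  omega

lemma hasWalks_source (hT : ∀ i j, i < j → A (g i) (g j)) (hg : Function.Injective g)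
    (hw : ∀ n, A (w n) (w (n + 1))) (hdisj : Disjoint (Set.range g) (Set.range w))
    {v : α} {B : Finset α} (hB : ∀ j ∈ B, j < v) (hsource : ∀ j ∈ insert v B, ∀ n, A (w n) (g j))
    {k : ℕ} (hk : #B < k) :
    HasWalks A k (2 ^ #B) (w 0) (g v) := by
  classical
  have hseg (o r : ℕ) : ∀ x ∈ walkSegment w o r, x ∉ Set.range g := fun _ hx =>
    Set.disjoint_right.1 hdisj (mem_range_of_mem_walkSegment hx)
  have hsuf (S : Finset α) : ∀ x ∈ (tourPath g S ++ [g v]).head?, ¬ x ∉ Set.range g := by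
    intro x hx
    rcases List.mem_append.1 (List.mem_of_mem_head? hx) with hx | hx
    exacts [not_not.2 (mem_range_of_mem_tourPath hx), by simp [List.mem_singleton.1 hx]]
  have hL : Function.Injective
      fun S => walkSegment w 0 (k - #S - 1) ++ (tourPath g S ++ [g v]) := fun S S' h =>
    tourPath_injective hg <| List.append_cancel_right
      (List.append_inj_of_forall_of_not_head _ (hseg _ _) (hseg _ _) (hsuf S) (hsuf S') h).2
  rw [← card_powerset, ← card_image_of_injective _ hL]
  refine hasWalks_of_finset _ fun l hl => ?_
  obtain ⟨S, hS, rfl⟩ := mem_image.1 hl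
  have hSB := mem_powerset.1 hS
  obtain ⟨j, hj, hsuf⟩ := exists_isWalkList_tourPath_concat hT fun i hi => hB i (hSB hi)
  have hseg := isWalkList_walkSegment hw 0 (k - #S - 1)
  have hSk : #S < k := (card_le_card hSB).trans_lt hk
  convert hseg.append hsuf (hsource j (insert_subset_insert v hSB hj) _) using 1
  omega

lemma exists_injective_loops_of_lt_of_lt (hT : ∀ i j, i < j → A (g i) (g j))
    (hg : Function.Injective g) {x : V} {i l j : α} (hil : i < l) (hlj : l < j)
    (hxi : A x (g i)) (hjx : A (g j) x) (hl : A x (g l) ∨ A (g l) x) :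
    ∃ loop : Bool → List V, Function.Injective loop ∧
      ∀ b, ∃ y, IsWalkList A 2 x y (loop b) ∧ A y x := by
  rcases hl with hxl | hlx
  · refine ⟨fun b => cond b [x, g l, g j] [x, g i, g j], Bool.injective_iff.2 ?_, ?_⟩
    · simpa using hg.ne hil.ne
    · rintro (_ | _)
      exacts [⟨g j, .triple hxi (hT i j (hil.trans hlj)), hjx⟩,
        ⟨g j, .triple hxl (hT l j hlj), hjx⟩]
  · refine ⟨fun b => cond b [x, g i, g l] [x, g i, g j], Bool.injective_iff.2 ?_, ?_⟩
    · simpa using hg.ne hlj.ne'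
    · rintro (_ | _)
      exacts [⟨g j, .triple hxi (hT i j (hil.trans hlj)), hjx⟩,
        ⟨g l, .triple hxi (hT i l hil), hlx⟩]

lemma hasWalks_switch (hT : ∀ i j, i < j → A (g i) (g j)) (hg : Function.Injective g)
    (hw : ∀ n, A (w n) (w (n + 1))) (hdisj : Disjoint (Set.range g) (Set.range w))
    {u v : α} {B₁ B₂ : Finset α} (hB₁ : ∀ j ∈ B₁, u < j) (hB₂ : ∀ j ∈ B₂, j < v) {d : ℕ} {x : V}
    (hin : ∀ j ∈ insert u B₁, A (g j) (w d)) (hout : ∀ j ∈ insert v B₂, A (w (d + 1)) (g j))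
    (hx₁ : A (w (d + 1)) x) (hx₂ : A x (w d)) (N q : ℕ) :
    HasWalks A (N + 3 * q + 3) ((#B₁ + #B₂).choose N) (g u) (g v) := by
  classical
  set M := (List.replicate q ()).flatMap (fun _ => [w d, w (d + 1), x]) ++ walkSegment w d 1
  have hM : IsWalkList A (3 * q + 1) (w d) (w (d + 1)) M := by
    simpa using isWalkList_flatMap_append (fun _ => ⟨x, .triple (hw d) hx₁, hx₂⟩)
      (isWalkList_walkSegment hw d 1) (List.replicate q ())
  have hpre (S : Finset α) : ∀ y ∈ g u :: tourPath g S, y ∈ Set.range g :=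
    List.forall_mem_cons.2 ⟨⟨u, rfl⟩, fun _ => mem_range_of_mem_tourPath⟩
  have hMhead (l : List V) : ∀ y ∈ (M ++ l).head?, y ∉ Set.range g := by
    intro y hy
    rw [List.head?_append, hM.2.2.1, Option.some_or, Option.mem_some_iff] at hy
    exact Set.disjoint_right.1 hdisj ⟨d, hy⟩
  have hL : Function.Injective fun W : Finset (α ⊕ α) =>
      (g u :: tourPath g W.toLeft) ++ (M ++ (tourPath g W.toRight ++ [g v])) := by
    intro W W' h
    obtain ⟨h₁, h₂⟩ :=
      List.append_inj_of_forall_of_not_head _ (hpre _) (hpre _) (hMhead _) (hMhead _) h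
    rw [← toLeft_disjSum_toRight (u := W), ← toLeft_disjSum_toRight (u := W'),
      tourPath_injective hg (List.cons_injective h₁),
      tourPath_injective hg (List.append_cancel_right (List.append_cancel_left h₂))]
  rw [← card_disjSum, ← card_powersetCard, ← card_image_of_injective _ hL]
  refine hasWalks_of_finset _ fun l hl => ?_
  obtain ⟨W, hW, rfl⟩ := mem_image.1 hl
  obtain ⟨hWB, hWN⟩ := mem_powersetCard.1 hW
  have hleft : W.toLeft ⊆ B₁ := fun j hj => inl_mem_disjSum.1 (hWB (mem_toLeft.1 hj))
  have hright : W.toRight ⊆ B₂ := fun j hj => inr_mem_disjSum.1 (hWB (mem_toRight.1 hj))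
  obtain ⟨j₁, hj₁, hpre⟩ := exists_isWalkList_cons_tourPath hT fun i hi => hB₁ i (hleft hi)
  obtain ⟨j₂, hj₂, hsuf⟩ := exists_isWalkList_tourPath_concat hT fun i hi => hB₂ i (hright hi)
  have := hpre.append (hM.append hsuf (hout j₂ (insert_subset_insert v hright hj₂)))
    (hin j₁ (insert_subset_insert u hleft hj₁))
  convert this using 1
  rw [← hWN, ← card_toLeft_add_card_toRight]
  ring

end Families

lemma choose_le_choose_add_add (n k r : ℕ) : n.choose k ≤ (n + r).choose (k + r) := by
  induction r with
  | zero => rfl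
  | succ r ih =>
    rw [← add_assoc, ← add_assoc, Nat.choose_succ_succ']
    exact ih.trans (Nat.le_add_right _ _)

lemma choose_two_le_two_pow (n : ℕ) : (n + 1).choose 2 ≤ 2 ^ n := by
  induction n with
  | zero => simp
  | succ n ih =>
    rw [Nat.choose_succ_succ', Nat.choose_one_right, pow_succ]
    linarith [(Nat.lt_two_pow_self (n := n))]

lemma exists_natCast_eq_ceil_sqrt {t : ℕ} (ht : 1 ≤ t) :
    ∃ p : ℕ, (p : ℤ) = ⌈√(2 * (t : ℝ) + 9 / 4) + 1 / 2⌉ ∧ 3 ≤ p ∧ t + 1 ≤ p.choose 2 := by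
  have ht' : (1 : ℝ) ≤ t := by exact_mod_cast ht
  have hsq := Real.sq_sqrt (show (0 : ℝ) ≤ 2 * t + 9 / 4 by positivity)
  have hgt : 3 / 2 < √(2 * (t : ℝ) + 9 / 4) := by
    rw [Real.lt_sqrt (by norm_num)]
    linarith
  have h2 : (2 : ℤ) < ⌈√(2 * (t : ℝ) + 9 / 4) + 1 / 2⌉ := by
    rw [Int.lt_ceil]
    push_cast
    linarith
  obtain ⟨p, hp⟩ := Int.eq_ofNat_of_zero_le (h2.le.trans' (by norm_num))
  have hle : √(2 * (t : ℝ) + 9 / 4) + 1 / 2 ≤ p := by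
    exact_mod_cast hp ▸ Int.le_ceil _
  have hp3 : 3 ≤ p := by omega
  refine ⟨p, hp.symm, hp3, ?_⟩
  rw [Nat.choose_two_right, Nat.le_div_iff_mul_le two_pos]
  have : ((t + 1) * 2 : ℝ) ≤ p * ((p - 1 : ℕ) : ℝ) := by
    rw [Nat.cast_sub (by omega), Nat.cast_one]
    nlinarith [mul_self_le_mul_self (Real.sqrt_nonneg _)
      (show √(2 * (t : ℝ) + 9 / 4) ≤ p - 1 / 2 by linarith)]
  exact_mod_cast this

section Tournament

variable {m : ℕ} {g : Fin m → V} {w : ℕ → V}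

lemma hasWalks_switch_fin (hT : ∀ i j, i < j → A (g i) (g j)) (hg : Function.Injective g)
    (hw : ∀ n, A (w n) (w (n + 1))) (hdisj : Disjoint (Set.range g) (Set.range w))
    {t p k d : ℕ} (hp : 3 ≤ p) (hpm : 2 * p + 1 ≤ m) (hpt : t + 1 ≤ p.choose 2) (hk : 2 * p ≤ k)
    (hd : ∀ j : Fin m, j.val < p → A (g j) (w d)) {a : Fin m} (ha : a.val < p)
    (hxa : A (w (d + 1)) (g a)) (hfar : ∀ j : Fin m, a.val + 2 ≤ j.val → A (w (d + 1)) (g j)) :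
    HasWalks A k (t + 1) (g ⟨0, by omega⟩) (g ⟨m - 1, by omega⟩) := by
  set N := 2 + (k - 2) % 3
  set B₁ := Ioo (⟨0, by omega⟩ : Fin m) ⟨p, by omega⟩
  set B₂ := insert a (Ioo (⟨a + 1, by omega⟩ : Fin m) ⟨m - 1, by omega⟩)
  have hB₂ : #B₂ = m - a - 2 := by
    rw [card_insert_of_notMem (by simp [Fin.lt_def]), Fin.card_Ioo]
    dsimp only
    omega
  have hcount : t + 1 ≤ (#B₁ + #B₂).choose N := calc
    t + 1 ≤ p.choose 2 := hpt
    _ ≤ (p + (N - 2)).choose (2 + (N - 2)) := choose_le_choose_add_add p 2 (N - 2)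
    _ ≤ (#B₁ + #B₂).choose N := by
      rw [Fin.card_Ioo, hB₂, Nat.add_sub_cancel' (by omega)]
      dsimp only
      exact Nat.choose_le_choose N (by omega)
  have hswitch := hasWalks_switch hT hg hw hdisj (u := ⟨0, by omega⟩) (v := ⟨m - 1, by omega⟩)
    (B₁ := B₁) (B₂ := B₂) (x := g a)
    (fun j hj => (mem_Ioo.1 hj).1)
    (fun j hj => by
      rcases mem_insert.1 hj with rfl | hj
      exacts [Fin.lt_def.2 (by simp; omega), (mem_Ioo.1 hj).2])
    (fun j hj => hd j (by
      rcases mem_insert.1 hj with rfl | hj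
      exacts [by simp; omega, Fin.lt_def.1 (mem_Ioo.1 hj).2]))
    (fun j hj => by
      rcases mem_insert.1 hj with rfl | hj
      · exact hfar _ (by simp; omega)
      rcases mem_insert.1 hj with rfl | hj
      exacts [hxa, hfar j (Fin.lt_def.1 (mem_Ioo.1 hj).1)])
    hxa (hd a ha) N ((k - 2) / 3 - 1)
  rw [show N + 3 * ((k - 2) / 3 - 1) + 3 = k by omega] at hswitch
  exact hswitch.mono hcount

lemma hasWalks_of_no_cross (hT : ∀ i j, i < j → A (g i) (g j)) (hg : Function.Injective g)
    (hw : ∀ n, A (w n) (w (n + 1))) {P : ℕ} (hP : 0 < P) (hper : Function.Periodic w P)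
    (hdisj : Disjoint (Set.range g) (Set.range w))
    (hbetween : ∀ n j, A (w n) (g j) ∨ A (g j) (w n))
    (hcross : ∀ n (j j' : Fin m), j.val + 2 ≤ j'.val → A (w n) (g j) → ¬ A (g j') (w n))
    {t p k : ℕ} (hp : 3 ≤ p) (hpm : 2 * p + 1 ≤ m) (hpt : t + 1 ≤ p.choose 2) (hk : 2 * p ≤ k) :
    ∃ u v, HasWalks A k (t + 1) u v := by
  have h2p : t + 1 ≤ 2 ^ (p - 1) := by
    refine hpt.trans ?_
    simpa [Nat.sub_add_cancel (by omega : 1 ≤ p)] using choose_two_le_two_pow (p - 1)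
  by_cases hsink : ∀ n (j : Fin m), j.val < p → A (g j) (w n)
  · refine ⟨_, _, (hasWalks_sink hT hg hw hdisj (u := ⟨0, by omega⟩) (B := Ioo _ ⟨p, by omega⟩)
      (fun j hj => (mem_Ioo.1 hj).1) (fun j hj n => hsink n j ?_) (k := k) ?_).mono ?_⟩
    · rcases mem_insert.1 hj with rfl | hj
      exacts [by simp; omega, Fin.lt_def.1 (mem_Ioo.1 hj).2]
    all_goals rw [Fin.card_Ioo]; dsimp only; omega
  by_cases hsource : ∀ n (j : Fin m), m - p ≤ j.val → A (w n) (g j)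
  · refine ⟨_, _, (hasWalks_source hT hg hw hdisj (v := ⟨m - 1, by omega⟩)
      (B := Ico ⟨m - p, by omega⟩ _) (fun j hj => (mem_Ico.1 hj).2)
      (fun j hj n => hsource n j ?_) (k := k) ?_).mono ?_⟩
    · rcases mem_insert.1 hj with rfl | hj
      exacts [by simp; omega, Fin.le_def.1 (mem_Ico.1 hj).1]
    all_goals rw [Fin.card_Ico]; dsimp only
    · omega
    · rwa [show m - 1 - (m - p) = p - 1 by omega]
  push Not at hsink hsource
  obtain ⟨n₀, j₀, hj₀, hn₀⟩ := hsink
  obtain ⟨n₁, j₁, hj₁, hn₁⟩ := hsource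
  set IsSink := fun n => ∀ j : Fin m, j.val < p → A (g j) (w n)
  have hsink₁ : IsSink n₁ := fun j hj => (hbetween n₁ j).resolve_left fun h =>
    hcross n₁ j j₁ (by omega) h ((hbetween n₁ j₁).resolve_left hn₁)
  obtain ⟨d, hd, hd'⟩ : ∃ d, IsSink d ∧ ¬ IsSink (d + 1) := by
    by_contra! h
    have := Nat.le_induction (P := fun n _ => IsSink n) hsink₁ (fun n _ => h n) (n₀ + n₁ * P)
      (by nlinarith)
    simp only [IsSink, show w (n₀ + n₁ * P) = w n₀ by simpa using hper.nat_mul n₁ n₀] at this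
    exact hn₀ (this j₀ hj₀)
  obtain ⟨a, ha, hna⟩ : ∃ a : Fin m, a.val < p ∧ ¬ A (g a) (w (d + 1)) := by
    simpa [IsSink] using hd'
  have hxa := (hbetween (d + 1) a).resolve_right hna
  exact ⟨_, _, hasWalks_switch_fin hT hg hw hdisj hp hpm hpt hk hd ha hxa fun j hj =>
    (hbetween (d + 1) j).resolve_right (hcross (d + 1) a j hj hxa)⟩

lemma hasWalks_of_tournament
    (hT : ∀ i j, i < j → A (g i) (g j)) (hg : Function.Injective g)
    (hw : ∀ n, A (w n) (w (n + 1))) {P : ℕ} (hP : 0 < P) (hper : Function.Periodic w P)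
    (hdisj : Disjoint (Set.range g) (Set.range w))
    (hbetween : ∀ n j, A (w n) (g j) ∨ A (g j) (w n))
    {t p k : ℕ} (hp : 3 ≤ p) (hpm : 2 * p + 1 ≤ m) (hpt : t + 1 ≤ p.choose 2) (hkt : t + 1 ≤ k)
    (hk : t + 1 ≤ 2 ^ (k / 3)) :
    ∃ u v, HasWalks A k (t + 1) u v := by
  by_cases hkm : k + 2 ≤ m
  · refine ⟨_, _, (hasWalks_tourPath hT hg (u := ⟨0, by omega⟩) (v := ⟨k + 1, by omega⟩)
      (Fin.lt_def.2 (by simp)) (B := Ioo _ _) (fun j hj => mem_Ioo.1 hj) (by omega : 1 ≤ k)).mono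
      ?_⟩
    obtain ⟨s, rfl⟩ : ∃ s, k = s + 1 := ⟨k - 1, by omega⟩
    simpa [Fin.card_Ioo] using hkt
  by_cases hcross : ∃ (n : ℕ) (j j' : Fin m), j.val + 2 ≤ j'.val ∧ A (w n) (g j) ∧ A (g j') (w n)
  · obtain ⟨n, j, j', hjj', hxj, hj'x⟩ := hcross
    obtain ⟨loop, hinj, hloop⟩ := exists_injective_loops_of_lt_of_lt hT hg
      (l := ⟨j + 1, by omega⟩) (Fin.lt_def.2 (by simp)) (Fin.lt_def.2 (by simp; omega))
      hxj hj'x (hbetween n _)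
    have := hasWalks_pow_of_injective_loops hw hinj hloop (k / 3) (k % 3)
    rw [Fintype.card_bool, show (2 + 1) * (k / 3) + k % 3 = k by omega] at this
    exact ⟨_, _, this.mono hk⟩
  push Not at hcross
  exact hasWalks_of_no_cross hT hg hw hP hper hdisj hbetween hcross hp hpm hpt (by omega)

end Tournament

section Cycle

def cycleWalk (lc : ℕ) (c : Fin (lc + 1) → V) (n : ℕ) : V := c (Fin.ofNat (lc + 1) (n % lc))

variable {lc : ℕ} {c : Fin (lc + 1) → V}

lemma periodic_cycleWalk : Function.Periodic (cycleWalk lc c) lc := fun n => by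
  simp [cycleWalk]

lemma IsCycle.cycleWalk_succ (hc : IsCycle A lc c) (n : ℕ) :
    A (cycleWalk lc c n) (cycleWalk lc c (n + 1)) := by
  obtain ⟨hlc, hwalk, hclosed, -⟩ := hc
  have hmod : n % lc < lc := Nat.mod_lt n hlc
  have hofNat (i : ℕ) (hi : i < lc + 1) : Fin.ofNat (lc + 1) i = ⟨i, hi⟩ :=
    Fin.ext (Nat.mod_eq_of_lt hi)
  have h := hwalk ⟨n % lc, hmod⟩
  rw [cycleWalk, cycleWalk, hofNat _ (by omega), ← Nat.mod_add_mod n lc 1]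
  rcases (show n % lc + 1 ≤ lc from hmod).lt_or_eq with hlt | heq
  · rwa [Nat.mod_eq_of_lt hlt, hofNat _ (by omega)]
  · rw [heq, Nat.mod_self, Fin.ofNat_zero, ← hclosed]
    convert h using 2 <;> ext <;> simp [heq]

end Cycle

end

/-- A cycle `C` and a disjoint transitive tournament `T` on at least
`2⌈√(2t+9/4)+1/2⌉+1` vertices, with an arc between every vertex of `C` and every
vertex of `T`, force `t+1` walks of every length `k ≥ max{t+1, 3⌈log₂(t+1)⌉}`
with the same endpoints. -/
theorem stmt_8 {V : Type*} (A : V → V → Prop) (t : ℕ) (ht : 1 ≤ t)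
    (lc : ℕ) (c : Fin (lc+1) → V) (hc : IsCycle A lc c)
    (m : ℕ) (g : Fin m → V) (hg : Function.Injective g)
    (hdisj : ∀ i j, g i ≠ c j)
    (hm : (2 * ⌈Real.sqrt (2 * (t : ℝ) + 9/4) + 1/2⌉ + 1 : ℤ) ≤ (m : ℤ))
    (hT : ∀ i j : Fin m, A (g i) (g j) ↔ i < j)
    (hbetween : ∀ i j, A (c i) (g j) ∨ A (g j) (c i))
    (k : ℕ) (hk : max (t+1) (3 * Nat.clog 2 (t+1)) ≤ k) :
    ∃ u v, HasWalks A k (t+1) u v := by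
  obtain ⟨p, hpq, hp, hpt⟩ := exists_natCast_eq_ceil_sqrt ht
  rw [← hpq] at hm
  have hclog : Nat.clog 2 (t + 1) ≤ k / 3 :=
    (Nat.le_div_iff_mul_le three_pos).2 (by linarith [le_of_max_le_right hk])
  exact hasWalks_of_tournament (fun i j h => (hT i j).2 h) hg hc.cycleWalk_succ hc.1
    periodic_cycleWalk (Set.disjoint_range_iff.2 fun j n => hdisj j _) (fun n j => hbetween _ j)
    hp (by omega) hpt (le_of_max_le_left hk)
    ((Nat.le_pow_clog one_lt_two _).trans (Nat.pow_le_pow_right two_pos hclog))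
end

section
/- Let t be a positive integer and k ≥ n−1 ≥ max{2t+1, 2⌈√(2t+9/4)+1/2⌉+3}. Then the maximum number of arcs in a digraph on n vertices in which every ordered pair of vertices is joined by at most t distinct walks of length k equals n(n−1)/2. -/
/-- A digraph is `F_{k,t+1}`-free: every ordered pair of vertices is joined by
at most `t` walks of length `k`. -/
def Free (n k t : ℕ) (A : Finset (Fin n × Fin n)) : Prop :=
  ∀ u v : Fin n, ¬ HasWalks (fun x y => (x, y) ∈ A) k (t+1) u v

namespace Stmt10Aux

set_option linter.unusedVariables false

lemma build {V : Type*} {R : V → V → Prop} {k s : ℕ} {u v : V}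
    (g : ℕ → ℕ → V)
    (harc : ∀ i, i < s → ∀ j, j < k → R (g i j) (g i (j+1)))
    (h0 : ∀ i, i < s → g i 0 = u) (hlast : ∀ i, i < s → g i k = v)
    (hinj : ∀ i i', i < i' → i' < s → ∃ j, j ≤ k ∧ g i j ≠ g i' j) :
    HasWalks R k s u v := by
  refine ⟨fun i j => g i.val j.val, ?_, ?_⟩
  · intro i i' hii
    by_contra hne
    rcases Nat.lt_trichotomy i.val i'.val with h | h | h
    · obtain ⟨j, hj, hgj⟩ := hinj i.val i'.val h i'.isLt
      exact hgj (congrFun hii (⟨j, by omega⟩ : Fin (k+1)))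
    · exact hne (Fin.ext h)
    · obtain ⟨j, hj, hgj⟩ := hinj i'.val i.val h i.isLt
      exact hgj (congrFun hii (⟨j, by omega⟩ : Fin (k+1))).symm
  · intro i
    refine ⟨?_, ?_, ?_⟩
    · intro jj
      have h := harc i.val i.isLt jj.val jj.isLt
      simpa using h
    · simpa using h0 i.val i.isLt
    · simpa using hlast i.val i.isLt

/-- Family A : a vertex with two distinct "partners" gives t+1 walks. -/
lemma famA {V : Type*} {R : V → V → Prop} {k t : ℕ} (hk : 2*t+1 ≤ k)
    {a p q : V} (hpq : p ≠ q) (hap : R a p) (hpa : R p a) (haq : R a q) (hqa : R q a) :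
    HasWalks R k (t+1) a (if k % 2 = 0 then a else q) := by
  apply build (g := fun i j => if j ≤ 2*i then (if j % 2 = 0 then a else p)
      else (if j % 2 = 0 then a else q))
  · intro i hi j hj
    split_ifs <;> first | assumption | omega
  · intro i hi; simp
  · intro i hi
    have h2 : ¬ (k ≤ 2*i) := by omega
    simp only [h2, if_false]
  · intro i i' hii hi'
    refine ⟨2*i+1, by omega, ?_⟩
    have e1 : ¬ (2*i+1 ≤ 2*i) := by omega
    have e2 : (2*i+1) ≤ 2*i' := by omega
    have e3 : (2*i+1) % 2 = 1 := by omega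
    simp only [e1, e2, e3, if_false, if_true]
    simp only [show (1:ℕ) ≠ 0 by omega, if_false]
    exact fun hh => hpq (hh.symm)

/-- Family B : two disjoint gadgets joined by an arc give t+1 walks. -/
lemma famB {V : Type*} {R : V → V → Prop} {k t : ℕ} (hk : 2*t+1 ≤ k)
    {a p w q : V} (hwp : w ≠ p)
    (hap : R a p) (hpa : R p a) (hwq : R w q) (hqw : R q w) (haw : R a w) :
    HasWalks R k (t+1) a (if (k-1) % 2 = 0 then w else q) := by
  apply build (g := fun i j => if j ≤ 2*i then (if j % 2 = 0 then a else p)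
      else (if (j - (2*i+1)) % 2 = 0 then w else q))
  · intro i hi j hj
    split_ifs <;> first | assumption | omega
  · intro i hi; simp
  · intro i hi
    have h2 : ¬ (k ≤ 2*i) := by omega
    have h3 : (k - (2*i+1)) % 2 = (k-1) % 2 := by omega
    simp only [h2, if_false, h3]
  · intro i i' hii hi'
    refine ⟨2*i+1, by omega, ?_⟩
    have e1 : ¬ (2*i+1 ≤ 2*i) := by omega
    have e2 : (2*i+1) ≤ 2*i' := by omega
    have e3 : (2*i+1) % 2 = 1 := by omega
    have e4 : (2*i+1 - (2*i+1)) % 2 = 0 := by omega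
    simp only [e1, e2, e3, e4, if_false, if_true]
    simp only [show (1:ℕ) ≠ 0 by omega, if_false]
    exact hwp


set_option maxHeartbeats 2000000 in
/-- Family C : digon/loop at `a` plus a 3-cycle through `a`. -/
lemma famC {V : Type*} {R : V → V → Prop} {k t K : ℕ} (hk : 2*t+1 ≤ k)
    (hK1 : K % 2 = 1) (hK9 : 9 ≤ K) (hKk : K ≤ k) (hKk2 : k ≤ K + 1)
    {a p b c : V} (hca : c ≠ a)
    (hap : R a p) (hpa : R p a) (hab : R a b) (hbc : R b c) (hc2 : R c a) :
    HasWalks R k (t+1) a (if k = K then a else p) := by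
  apply build (g := fun i j =>
    if 2*i + 3 ≤ K then
      (if j < 2*i then (if j % 2 = 0 then a else p)
       else if j ≤ 2*i+3 then
         (if j - 2*i = 0 then a else if j - 2*i = 1 then b else if j - 2*i = 2 then c else a)
       else if j ≤ K then (if (j - (2*i+3)) % 2 = 0 then a else p)
       else p)
    else
      (if j ≤ 9 then (if j % 3 = 0 then a else if j % 3 = 1 then b else c)
       else if j ≤ K then (if (j - 9) % 2 = 0 then a else p)
       else p))
  · intro i hi j hj
    split_ifs <;> first | assumption | contradiction | omega
  · intro i hi
    split_ifs <;> first | rfl | contradiction | omega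
  · intro i hi
    split_ifs <;> first | rfl | contradiction | omega
  · intro i i' hii hi'
    by_cases hpi : 2*i+3 ≤ K
    · by_cases hpi' : 2*i'+3 ≤ K
      · refine ⟨2*i+2, by omega, ?_⟩
        split_ifs <;> first | exact hca | exact fun h => hca h.symm | contradiction | omega
      · rcases Nat.eq_zero_or_pos i with hi0 | hi0
        · refine ⟨5, by omega, ?_⟩
          subst hi0
          split_ifs <;> first | exact hca | exact fun h => hca h.symm | contradiction | omega
        · refine ⟨2, by omega, ?_⟩
          split_ifs <;> first | exact hca | exact fun h => hca h.symm | contradiction | omega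
    · exact absurd rfl (by omega : ¬ (0=0))

/-- Family D : digon/loop at `a` plus a 3-cycle `s→b→c→s` pointing into `a`. -/
lemma famD {V : Type*} {R : V → V → Prop} {k t : ℕ} (hk : 2*t+1 ≤ k)
    {a p s b c : V} (hsa : s ≠ a) (hba : b ≠ a) (hca : c ≠ a)
    (hap : R a p) (hpa : R p a)
    (hsb : R s b) (hbc : R b c) (hcs : R c s)
    (hs2 : R s a) (hb2 : R b a) (hc2 : R c a) :
    HasWalks R k (t+1) s a := by
  apply build (g := fun i j =>
    if j ≤ k - 1 - 2*i then (if j % 3 = 0 then s else if j % 3 = 1 then b else c)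
    else (if (j - (k - 2*i)) % 2 = 0 then a else p))
  · intro i hi j hj
    split_ifs <;> first | assumption | contradiction | omega
  · intro i hi
    split_ifs <;> first | rfl | contradiction | omega
  · intro i hi
    split_ifs <;> first | rfl | contradiction | omega
  · intro i i' hii hi'
    refine ⟨k - 2*i', by omega, ?_⟩
    split_ifs <;>
      first | exact hsa | exact hba | exact hca |
        exact fun h => hsa h.symm | exact fun h => hba h.symm | exact fun h => hca h.symm | contradiction | omega

/-- Family E : digon/loop at `a` plus a 3-cycle `z0→z1→z2→z0` pointed to from `a`. -/
lemma famE {V : Type*} {R : V → V → Prop} {k t : ℕ} (hk : t+1 ≤ k) (hk2 : 1 ≤ k)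
    {a p z0 z1 z2 : V}
    (h0a : z0 ≠ a) (h0p : z0 ≠ p) (h1a : z1 ≠ a) (h1p : z1 ≠ p) (h2a : z2 ≠ a) (h2p : z2 ≠ p)
    (hap : R a p) (hpa : R p a)
    (h01 : R z0 z1) (h12 : R z1 z2) (h20 : R z2 z0)
    (ha0 : R a z0) (ha1 : R a z1) (ha2 : R a z2)
    (hp0 : R p z0) (hp1 : R p z1) (hp2 : R p z2) :
    HasWalks R k (t+1) a z0 := by
  apply build (g := fun i j =>
    if j ≤ i then (if j % 2 = 0 then a else p)
    else (if (j + 2*k) % 3 = 0 then z0 else if (j + 2*k) % 3 = 1 then z1 else z2))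
  · intro i hi j hj
    split_ifs <;> first | assumption | contradiction | omega
  · intro i hi
    split_ifs <;> first | rfl | contradiction | omega
  · intro i hi
    split_ifs <;> first | rfl | contradiction | omega
  · intro i i' hii hi'
    refine ⟨i+1, by omega, ?_⟩
    split_ifs <;>
      first | exact h0a | exact h0p | exact h1a | exact h1p | exact h2a | exact h2p | contradiction | omega


/-- Family F : source `o1` of the in-side, two-step paths into the gadget, exit to `zs`. -/
lemma famF {V : Type*} {R : V → V → Prop} {k t : ℕ} (hk : 9 ≤ k)
    {o1 a p zs : V} (y : ℕ → V)
    (hya : ∀ i, i < t → y i ≠ a)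
    (hyinj : ∀ i j, i < t → j < t → i ≠ j → y i ≠ y j)
    (ho1a : R o1 a) (hap : R a p) (hpa : R p a)
    (ho1y : ∀ i, i < t → R o1 (y i)) (hy2 : ∀ i, i < t → R (y i) a)
    (haz : R a zs) (hpz : R p zs) :
    HasWalks R k (t+1) o1 zs := by
  apply build (g := fun i j =>
    if j = 0 then o1
    else if i = 0 then (if j ≤ k-1 then (if (j-1) % 2 = 0 then a else p) else zs)
    else (if j = 1 then y (i-1) else if j ≤ k-1 then (if j % 2 = 0 then a else p) else zs))
  · intro i hi j hj
    split_ifs <;>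
      first
      | assumption
      | exact ho1y _ (by omega)
      | exact hy2 _ (by omega)
      | contradiction
      | omega
  · intro i hi; split_ifs <;> first | rfl | contradiction | omega
  · intro i hi; split_ifs <;> first | rfl | contradiction | omega
  · intro i i' hii hi'
    refine ⟨1, by omega, ?_⟩
    rcases Nat.eq_zero_or_pos i with h0 | h0
    · subst h0
      split_ifs <;>
        first
        | exact fun h => hya (i'-1) (by omega) h.symm
        | contradiction
        | omega
    · split_ifs <;>
        first
        | exact hyinj _ _ (by omega) (by omega) (by omega)
        | contradiction
        | omega

set_option maxHeartbeats 3000000 in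
/-- Family F' : sink `zq` of the out-side. -/
lemma famFm {V : Type*} {R : V → V → Prop} {k t m : ℕ} (hk : 9 ≤ k) (hm : t ≤ m+1)
    {a p zq y1 y2 : V} (y : ℕ → V)
    (hy1a : y1 ≠ a) (hy1p : y1 ≠ p) (hy2y1 : y2 ≠ y1)
    (hy2ap : y2 ≠ a) (hy2p : y2 ≠ p)
    (hya : ∀ i, i < m → y i ≠ a) (hyp : ∀ i, i < m → y i ≠ p)
    (hyinj : ∀ i j, i < m → j < m → i ≠ j → y i ≠ y j)
    (hap : R a p) (hpa : R p a)
    (hay : ∀ i, i < m → R a (y i)) (hpy : ∀ i, i < m → R p (y i))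
    (hyz : ∀ i, i < m → R (y i) zq)
    (hazq : R a zq) (hpzq : R p zq)
    (hay1 : R a y1) (hpy1 : R p y1) (h12 : R y1 y2) (h2z : R y2 zq) :
    HasWalks R k (t+1) a zq := by
  apply build (g := fun i j =>
    if i = 0 then (if j ≤ k-1 then (if j % 2 = 0 then a else p) else zq)
    else if i ≤ m then
      (if j ≤ k-2 then (if j % 2 = 0 then a else p) else if j = k-1 then y (i-1) else zq)
    else
      (if j ≤ k-3 then (if j % 2 = 0 then a else p)
       else if j = k-2 then y1 else if j = k-1 then y2 else zq))
  · intro i hi j hj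
    split_ifs <;>
      first
      | assumption
      | exact hay _ (by omega)
      | exact hpy _ (by omega)
      | exact hyz _ (by omega)
      | contradiction
      | omega
  · intro i hi; split_ifs <;> first | rfl | contradiction | omega
  · intro i hi; split_ifs <;> first | rfl | contradiction | omega
  · intro i i' hii hi'
    rcases Nat.eq_zero_or_pos i with h0 | h0
    · subst h0
      by_cases hsm : i' ≤ m
      · refine ⟨k-1, by omega, ?_⟩
        split_ifs <;>
          first
          | exact fun h => hya (i'-1) (by omega) h.symm
          | exact fun h => hyp (i'-1) (by omega) h.symm
          | contradiction
          | omega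
      · refine ⟨k-1, by omega, ?_⟩
        split_ifs <;>
          first
          | exact fun h => hy2ap h.symm
          | exact fun h => hy2p h.symm
          | contradiction
          | omega
    · by_cases hsm : i' ≤ m
      · refine ⟨k-1, by omega, ?_⟩
        split_ifs <;>
          first
          | exact hyinj _ _ (by omega) (by omega) (by omega)
          | contradiction
          | omega
      · refine ⟨k-2, by omega, ?_⟩
        -- g i (k-2) = bounce (i ≤ m branch, k-2 ≤ k-2), g i' (k-2) = y1
        split_ifs <;>
          first
          | exact fun h => hy1a h.symm
          | exact fun h => hy1p h.symm
          | contradiction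
          | omega
  
/-- Family G (even k) : all of the rest is the in-side; two-step walks ending in the gadget. -/
lemma famGe {V : Type*} {R : V → V → Prop} {k t : ℕ} (hk : 9 ≤ k) (hke : k % 2 = 0)
    {o1 a p : V} (y : ℕ → V)
    (hya : ∀ i, i < t+1 → y i ≠ a)
    (hyinj : ∀ i j, i < t+1 → j < t+1 → i ≠ j → y i ≠ y j)
    (hap : R a p) (hpa : R p a)
    (ho1y : ∀ i, i < t+1 → R o1 (y i)) (hy2 : ∀ i, i < t+1 → R (y i) a) :
    HasWalks R k (t+1) o1 a := by
  apply build (g := fun i j =>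
    if j = 0 then o1 else if j = 1 then y i else (if j % 2 = 0 then a else p))
  · intro i hi j hj
    split_ifs <;>
      first
      | assumption
      | exact ho1y _ (by omega)
      | exact hy2 _ (by omega)
      | contradiction
      | omega
  · intro i hi; split_ifs <;> first | rfl | contradiction | omega
  · intro i hi; split_ifs <;> first | rfl | contradiction | omega
  · intro i i' hii hi'
    refine ⟨1, by omega, ?_⟩
    split_ifs <;>
      first
      | exact hyinj _ _ (by omega) (by omega) (by omega)
      | contradiction
      | omega

/-- Family G (odd k) : three-step walks ending in the gadget. -/
lemma famGo {V : Type*} {R : V → V → Prop} {k t : ℕ} (hk : 9 ≤ k) (hke : k % 2 = 1)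
    {o1 a p : V} (y z : ℕ → V)
    (hyinj : ∀ i j, i < t+1 → j < t+1 → i ≠ j → y i ≠ y j)
    (hap : R a p) (hpa : R p a)
    (ho1y : ∀ i, i < t+1 → R o1 (y i)) (hyz : ∀ i, i < t+1 → R (y i) (z i))
    (hza : ∀ i, i < t+1 → R (z i) a) :
    HasWalks R k (t+1) o1 a := by
  apply build (g := fun i j =>
    if j = 0 then o1 else if j = 1 then y i else if j = 2 then z i
    else (if j % 2 = 1 then a else p))
  · intro i hi j hj
    split_ifs <;>
      first
      | assumption
      | exact ho1y _ (by omega)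
      | exact hyz _ (by omega)
      | exact hza _ (by omega)
      | contradiction
      | omega
  · intro i hi; split_ifs <;> first | rfl | contradiction | omega
  · intro i hi; split_ifs <;> first | rfl | contradiction | omega
  · intro i i' hii hi'
    refine ⟨1, by omega, ?_⟩
    split_ifs <;>
      first
      | exact hyinj _ _ (by omega) (by omega) (by omega)
      | contradiction
      | omega


/-- In a 3-cycle-free "tournament-like" finset there is a source. -/
lemma exists_source {V : Type*} (R : V → V → Prop) (S : Finset V)
    (hne : S.Nonempty)
    (hadj : ∀ x ∈ S, ∀ y ∈ S, x ≠ y → R x y ∨ R y x)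
    (hirr : ∀ x ∈ S, ¬ R x x)
    (hno3 : ¬ ∃ x ∈ S, ∃ y ∈ S, ∃ z ∈ S, R x y ∧ R y z ∧ R z x) :
    ∃ o ∈ S, ∀ y ∈ S, y ≠ o → R o y := by
  classical
  obtain ⟨o, hoS, hmax⟩ := S.exists_max_image (fun x => (S.filter (fun z => R x z)).card) hne
  refine ⟨o, hoS, ?_⟩
  intro y hyS hyo
  by_contra hno
  have hyo' : R y o := (hadj o hoS y hyS (Ne.symm hyo)).resolve_left hno
  have hsub : insert o (S.filter (fun z => R o z)) ⊆ S.filter (fun z => R y z) := by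
    intro z hz
    rcases Finset.mem_insert.mp hz with rfl | hz
    · exact Finset.mem_filter.mpr ⟨hoS, hyo'⟩
    · obtain ⟨hzS, hoz⟩ := Finset.mem_filter.mp hz
      refine Finset.mem_filter.mpr ⟨hzS, ?_⟩
      by_contra hyz
      have hzy : z ≠ y := by rintro rfl; exact hno hoz
      have hzy' := (hadj y hyS z hzS (Ne.symm hzy)).resolve_left hyz
      exact hno3 ⟨y, hyS, o, hoS, z, hzS, hyo', hoz, hzy'⟩
  have hnotmem : o ∉ S.filter (fun z => R o z) :=
    fun h => hirr o hoS (Finset.mem_filter.mp h).2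
  have hcard : (S.filter (fun z => R o z)).card + 1 ≤ (S.filter (fun z => R y z)).card := by
    calc (S.filter (fun z => R o z)).card + 1
        = (insert o (S.filter (fun z => R o z))).card :=
          (Finset.card_insert_of_notMem hnotmem).symm
      _ ≤ _ := Finset.card_le_card hsub
  have := hmax y hyS
  omega

/-- Enumerate a nonempty finset injectively by naturals. -/
lemma exists_enum {V : Type*} (S : Finset V) (hne : S.Nonempty) :
    ∃ y : ℕ → V, (∀ i, i < S.card → y i ∈ S) ∧
      (∀ i j, i < S.card → j < S.card → i ≠ j → y i ≠ y j) := by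
  classical
  obtain ⟨v0, hv0⟩ := hne
  refine ⟨fun i => if h : i < S.card then (S.equivFin.symm ⟨i, h⟩ : V) else v0, ?_, ?_⟩
  · intro i hi
    simp only [dif_pos hi]
    exact (S.equivFin.symm ⟨i, hi⟩).2
  · intro i j hi hj hij
    simp only [dif_pos hi, dif_pos hj]
    intro h
    have h2 := S.equivFin.symm.injective (Subtype.coe_injective h)
    simp only [Fin.mk.injEq] at h2
    exact hij h2

/-- The number of "ordered pairs x < y with both in S". -/
lemma card_pairs {n : ℕ} (S : Finset (Fin n)) :
    ((Finset.univ : Finset (Fin n × Fin n)).filter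
      (fun p => p.1 < p.2 ∧ p.1 ∈ S ∧ p.2 ∈ S)).card = S.card.choose 2 := by
  classical
  have hset : (Finset.univ : Finset (Fin n × Fin n)).filter
      (fun p => p.1 < p.2 ∧ p.1 ∈ S ∧ p.2 ∈ S) = S.offDiag.filter (fun p => p.1 < p.2) := by
    ext p
    simp only [Finset.mem_filter, Finset.mem_univ, true_and, Finset.mem_offDiag]
    constructor
    · rintro ⟨h1, h2, h3⟩; exact ⟨⟨h2, h3, ne_of_lt h1⟩, h1⟩
    · rintro ⟨⟨h2, h3, _⟩, h1⟩; exact ⟨h1, h2, h3⟩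
  rw [hset]
  have hswap : (S.offDiag.filter (fun p => p.1 < p.2)).card
      = (S.offDiag.filter (fun p => ¬ p.1 < p.2)).card := by
    apply Finset.card_bij' (fun p _ => Prod.swap p) (fun p _ => Prod.swap p)
    · intro p hp
      obtain ⟨hp1, hp2⟩ := Finset.mem_filter.mp hp
      obtain ⟨ha, hb, hc⟩ := Finset.mem_offDiag.mp hp1
      exact Finset.mem_filter.mpr ⟨Finset.mem_offDiag.mpr ⟨hb, ha, Ne.symm hc⟩, by
        simp only [Prod.snd_swap, Prod.fst_swap]; exact not_lt_of_gt hp2⟩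
    · intro p hp
      obtain ⟨hp1, hp2⟩ := Finset.mem_filter.mp hp
      obtain ⟨ha, hb, hc⟩ := Finset.mem_offDiag.mp hp1
      refine Finset.mem_filter.mpr ⟨Finset.mem_offDiag.mpr ⟨hb, ha, Ne.symm hc⟩, ?_⟩
      simp only [Prod.snd_swap, Prod.fst_swap]
      rcases lt_or_gt_of_ne hc with h | h
      · exact absurd h hp2
      · exact h
    · intro p hp; simp
    · intro p hp; simp
  have htot := Finset.card_filter_add_card_filter_not
    (s := S.offDiag) (p := fun p => p.1 < p.2)
  have hoff : S.offDiag.card = S.card * S.card - S.card := Finset.offDiag_card S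
  rw [Nat.choose_two_right]
  have hmul : S.card * (S.card - 1) = S.card * S.card - S.card := by
    cases' hc : S.card with m
    · simp
    · rw [Nat.succ_sub_one, Nat.mul_succ]
      omega
  omega


/-- The final structural contradiction: a "star" digraph around a gadget cannot be free. -/
lemma final {V : Type*} {R : V → V → Prop} {k t : ℕ}
    (ht : 1 ≤ t) (hk1 : 2*t+1 ≤ k) (hk9 : 9 ≤ k)
    (hnw : ∀ u v : V, ¬ HasWalks R k (t+1) u v)
    (a p : V) (In Out : Finset V)
    (hap : R a p) (hpa : R p a)
    (haIn : a ∉ In) (haOut : a ∉ Out) (hpOut : p ∉ Out)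
    (hIn : ∀ z ∈ In, R z a ∧ R z p)
    (hOut : ∀ z ∈ Out, R a z ∧ R p z)
    (hadjI : ∀ y ∈ In, ∀ z ∈ In, y ≠ z → R y z ∨ R z y)
    (hadjO : ∀ y ∈ Out, ∀ z ∈ Out, y ≠ z → R y z ∨ R z y)
    (hirrI : ∀ z ∈ In, ¬ R z z) (hirrO : ∀ z ∈ Out, ¬ R z z)
    (hsum : 2*t ≤ In.card + Out.card) (hsum8 : 8 ≤ In.card + Out.card) : False := by
  classical
  by_cases hcI : ∃ x ∈ In, ∃ y ∈ In, ∃ z ∈ In, R x y ∧ R y z ∧ R z x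
  · obtain ⟨s, hs, b, hb, c, hc, h1, h2, h3⟩ := hcI
    exact hnw s a (famD hk1 (ne_of_mem_of_not_mem hs haIn) (ne_of_mem_of_not_mem hb haIn)
      (ne_of_mem_of_not_mem hc haIn) hap hpa h1 h2 h3
      (hIn s hs).1 (hIn b hb).1 (hIn c hc).1)
  by_cases hcO : ∃ x ∈ Out, ∃ y ∈ Out, ∃ z ∈ Out, R x y ∧ R y z ∧ R z x
  · obtain ⟨z0, h0, z1, hz1, z2, hz2, h1, h2, h3⟩ := hcO
    exact hnw a z0 (famE (by omega) (by omega)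
      (ne_of_mem_of_not_mem h0 haOut) (ne_of_mem_of_not_mem h0 hpOut)
      (ne_of_mem_of_not_mem hz1 haOut) (ne_of_mem_of_not_mem hz1 hpOut)
      (ne_of_mem_of_not_mem hz2 haOut) (ne_of_mem_of_not_mem hz2 hpOut)
      hap hpa h1 h2 h3
      (hOut z0 h0).1 (hOut z1 hz1).1 (hOut z2 hz2).1
      (hOut z0 h0).2 (hOut z1 hz1).2 (hOut z2 hz2).2)
  by_cases hsize : In.card ≤ Out.card
  · -- mirror family on the out-side
    have hOne : Out.Nonempty := Finset.card_pos.mp (by omega)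
    obtain ⟨zq, hzq, hsink⟩ := exists_source (fun x y => R y x) Out hOne
      (fun x hx y hy hxy => (hadjO y hy x hx (Ne.symm hxy)))
      hirrO
      (by rintro ⟨x, hx, y, hy, z, hz, r1, r2, r3⟩
          exact hcO ⟨x, hx, z, hz, y, hy, r3, r2, r1⟩)
    have hYne : (Out.erase zq).Nonempty := by
      apply Finset.card_pos.mp
      rw [Finset.card_erase_of_mem hzq]
      omega
    obtain ⟨y, hymem, hyinj⟩ := exists_enum (Out.erase zq) hYne
    have hYcard : (Out.erase zq).card = Out.card - 1 := Finset.card_erase_of_mem hzq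
    set m := min t (Out.card - 1) with hmdef
    have hmY : m ≤ (Out.erase zq).card := by omega
    have hyOut : ∀ i, i < m → y i ∈ Out ∧ y i ≠ zq := by
      intro i hi
      have := hymem i (by omega)
      exact ⟨Finset.mem_of_mem_erase this, Finset.ne_of_mem_erase this⟩
    -- two distinct adjacent elements of Out.erase zq
    have h2card : 1 < (Out.erase zq).card := by omega
    obtain ⟨w1, hw1, w2, hw2, hne12⟩ := Finset.one_lt_card.mp h2card
    have hw1O : w1 ∈ Out := Finset.mem_of_mem_erase hw1
    have hw2O : w2 ∈ Out := Finset.mem_of_mem_erase hw2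
    have hadj12 : R w1 w2 ∨ R w2 w1 := hadjO w1 hw1O w2 hw2O hne12
    have key : ∀ y1 y2 : V, y1 ∈ Out.erase zq → y2 ∈ Out.erase zq → y2 ≠ y1 →
        R y1 y2 → False := by
      intro y1 y2 hy1 hy2 hne h12
      have hy1O : y1 ∈ Out := Finset.mem_of_mem_erase hy1
      have hy2O : y2 ∈ Out := Finset.mem_of_mem_erase hy2
      exact hnw a zq (famFm hk9 (by omega) y
        (ne_of_mem_of_not_mem hy1O haOut) (ne_of_mem_of_not_mem hy1O hpOut) hne
        (ne_of_mem_of_not_mem hy2O haOut) (ne_of_mem_of_not_mem hy2O hpOut)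
        (fun i hi => ne_of_mem_of_not_mem (hyOut i hi).1 haOut)
        (fun i hi => ne_of_mem_of_not_mem (hyOut i hi).1 hpOut)
        (fun i j hi hj hij => hyinj i j (by omega) (by omega) hij)
        hap hpa
        (fun i hi => (hOut _ (hyOut i hi).1).1)
        (fun i hi => (hOut _ (hyOut i hi).1).2)
        (fun i hi => hsink _ (hyOut i hi).1 (hyOut i hi).2)
        (hOut zq hzq).1 (hOut zq hzq).2
        (hOut y1 hy1O).1 (hOut y1 hy1O).2 h12
        (hsink y2 hy2O (Finset.ne_of_mem_erase hy2)))
    rcases hadj12 with h | h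
    · exact key w1 w2 hw1 hw2 (Ne.symm hne12) h
    · exact key w2 w1 hw2 hw1 hne12 h
  · -- in-side bigger
    have hInNe : In.Nonempty := Finset.card_pos.mp (by omega)
    obtain ⟨o1, ho1, hsrc⟩ := exists_source R In hInNe hadjI hirrI hcI
    have hYcard : (In.erase o1).card = In.card - 1 := Finset.card_erase_of_mem ho1
    by_cases hOne : Out.Nonempty
    · obtain ⟨zs, hzs⟩ := hOne
      have hYne : (In.erase o1).Nonempty := Finset.card_pos.mp (by omega)
      obtain ⟨y, hymem, hyinj⟩ := exists_enum (In.erase o1) hYne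
      have htY : t ≤ (In.erase o1).card := by omega
      have hyIn : ∀ i, i < t → y i ∈ In ∧ y i ≠ o1 := by
        intro i hi
        have := hymem i (by omega)
        exact ⟨Finset.mem_of_mem_erase this, Finset.ne_of_mem_erase this⟩
      exact hnw o1 zs (famF hk9 y
        (fun i hi => ne_of_mem_of_not_mem (hyIn i hi).1 haIn)
        (fun i j hi hj hij => hyinj i j (by omega) (by omega) hij)
        (hIn o1 ho1).1 hap hpa
        (fun i hi => hsrc _ (hyIn i hi).1 (hyIn i hi).2)
        (fun i hi => (hIn _ (hyIn i hi).1).1)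
        (hOut zs hzs).1 (hOut zs hzs).2)
    · have hOut0 : Out.card = 0 := by
        rw [Finset.not_nonempty_iff_eq_empty] at hOne
        simp [hOne]
      by_cases hke : k % 2 = 0
      · have hYne : (In.erase o1).Nonempty := Finset.card_pos.mp (by omega)
        obtain ⟨y, hymem, hyinj⟩ := exists_enum (In.erase o1) hYne
        have htY : t + 1 ≤ (In.erase o1).card := by omega
        have hyIn : ∀ i, i < t+1 → y i ∈ In ∧ y i ≠ o1 := by
          intro i hi
          have := hymem i (by omega)
          exact ⟨Finset.mem_of_mem_erase this, Finset.ne_of_mem_erase this⟩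
        exact hnw o1 a (famGe hk9 hke y
          (fun i hi => ne_of_mem_of_not_mem (hyIn i hi).1 haIn)
          (fun i j hi hj hij => hyinj i j (by omega) (by omega) hij)
          hap hpa
          (fun i hi => hsrc _ (hyIn i hi).1 (hyIn i hi).2)
          (fun i hi => (hIn _ (hyIn i hi).1).1))
      · -- k odd : three-step walks
        set Y := (In.erase o1).filter (fun v => ∃ w, w ∈ In ∧ w ≠ v ∧ R v w) with hYdef
        have hB : ((In.erase o1).filter (fun v => ¬ ∃ w, w ∈ In ∧ w ≠ v ∧ R v w)).card ≤ 1 := by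
          apply Finset.card_le_one.mpr
          intro v1 h1 v2 h2
          by_contra hne
          obtain ⟨h1e, h1p⟩ := Finset.mem_filter.mp h1
          obtain ⟨h2e, h2p⟩ := Finset.mem_filter.mp h2
          rcases hadjI v1 (Finset.mem_of_mem_erase h1e) v2 (Finset.mem_of_mem_erase h2e) hne with h | h
          · exact h1p ⟨v2, Finset.mem_of_mem_erase h2e, Ne.symm hne, h⟩
          · exact h2p ⟨v1, Finset.mem_of_mem_erase h1e, hne, h⟩
        have hYc : t + 1 ≤ Y.card := by
          have := Finset.card_filter_add_card_filter_not
            (s := In.erase o1) (p := fun v => ∃ w, w ∈ In ∧ w ≠ v ∧ R v w)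
          rw [← hYdef] at this
          omega
        have hYne : Y.Nonempty := Finset.card_pos.mp (by omega)
        obtain ⟨y, hymem, hyinj⟩ := exists_enum Y hYne
        have hyprop : ∀ i, i < t+1 → y i ∈ In ∧ y i ≠ o1 ∧ ∃ w, w ∈ In ∧ w ≠ y i ∧ R (y i) w := by
          intro i hi
          have h := hymem i (by omega)
          rw [hYdef, Finset.mem_filter] at h
          exact ⟨Finset.mem_of_mem_erase h.1, Finset.ne_of_mem_erase h.1, h.2⟩
        set z : ℕ → V := fun i =>
          if h : ∃ w, w ∈ In ∧ w ≠ y i ∧ R (y i) w then h.choose else a with hzdef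
        have hzprop : ∀ i, i < t+1 → z i ∈ In ∧ R (y i) (z i) := by
          intro i hi
          obtain ⟨_, _, hex⟩ := hyprop i hi
          rw [hzdef]
          simp only [dif_pos hex]
          exact ⟨hex.choose_spec.1, hex.choose_spec.2.2⟩
        exact hnw o1 a (famGo hk9 (by omega) y z
          (fun i j hi hj hij => hyinj i j (by omega) (by omega) hij)
          hap hpa
          (fun i hi => hsrc _ (hyprop i hi).1 (hyprop i hi).2.1)
          (fun i hi => (hzprop i hi).2)
          (fun i hi => (hIn _ (hzprop i hi).1).1))


lemma upper {n k t : ℕ} (ht : 1 ≤ t) (hn2 : 2*t+2 ≤ n) (hn10 : 10 ≤ n)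
    (hk1 : 2*t+1 ≤ k) (hk9 : 9 ≤ k)
    (A : Finset (Fin n × Fin n)) (hfree : Free n k t A) :
    A.card ≤ n * (n-1) / 2 := by
  classical
  set R : Fin n → Fin n → Prop := fun x y => (x, y) ∈ A with hR
  have hnw : ∀ u v : Fin n, ¬ HasWalks R k (t+1) u v := hfree
  by_contra hbig
  push_neg at hbig
  have hchoose : n * (n-1) / 2 = n.choose 2 := (Nat.choose_two_right n).symm
  have hL1 : ∀ a p q : Fin n, R a p → R p a → R a q → R q a → p = q := by
    intro a p q hap hpa haq hqa
    by_contra hpq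
    exact hnw a _ (famA hk1 hpq hap hpa haq hqa)
  have hL2 : ∀ a p w q : Fin n, R a p → R p a → R w q → R q w → w ≠ p → R a w → False := by
    intro a p w q hap hpa hwq hqw hwp haw
    exact hnw a _ (famB hk1 hwp hap hpa hwq hqw haw)
  set K := if k % 2 = 1 then k else k - 1 with hKdef
  have hKfacts : K % 2 = 1 ∧ 9 ≤ K ∧ K ≤ k ∧ k ≤ K + 1 := by
    rw [hKdef]; split_ifs with h <;> omega
  have hno3 : ∀ a p b c : Fin n, R a p → R p a → R a b → R b c → R c a → c = a := by
    intro a p b c hap hpa h1 h2 h3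
    by_contra hc
    exact hnw a _ (famC hk1 hKfacts.1 hKfacts.2.1 hKfacts.2.2.1 hKfacts.2.2.2 hc
      hap hpa h1 h2 h3)
  set P : Finset (Fin n) := Finset.univ.filter (fun v => ∃ x, R v x ∧ R x v) with hPdef
  have hPmem : ∀ v, v ∈ P ↔ ∃ x, R v x ∧ R x v := by
    intro v; simp [hPdef]
  have hsymm : ∀ v x : Fin n, v ∈ P → x ∈ P → R v x → R x v := by
    intro v x hv hx hvx
    obtain ⟨pv, hvp, hpv⟩ := (hPmem v).mp hv
    obtain ⟨qx, hxq, hqx⟩ := (hPmem x).mp hx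
    by_cases hxv : x = v
    · subst hxv; exact hvx
    by_cases hxp : x = pv
    · subst hxp; exact hpv
    by_cases hqv : qx = v
    · subst hqv; exact hxq
    by_cases hqp : qx = pv
    · subst hqp
      exact (hxv (hL1 qx v x hpv hvp hqx hxq).symm).elim
    · exact (hL2 v pv x qx hvp hpv hxq hqx hxp hvx).elim
  have hAPPinj : ∀ v x x' : Fin n, v ∈ P → x ∈ P → x' ∈ P → R v x → R v x' → x = x' := by
    intro v x x' hv hx hx' h1 h2
    exact hL1 v x x' h1 (hsymm v x hv hx h1) h2 (hsymm v x' hv hx' h2)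
  set APP := A.filter (fun a => a.1 ∈ P ∧ a.2 ∈ P) with hAPP
  set AR := A.filter (fun a => ¬ (a.1 ∈ P ∧ a.2 ∈ P)) with hAR
  have hsplit : APP.card + AR.card = A.card :=
    Finset.card_filter_add_card_filter_not _
  have hmemP2 : ∀ a : Fin n × Fin n, a ∈ A → R a.1 a.2 := by
    intro a ha
    show (a.1, a.2) ∈ A
    rwa [Prod.mk.eta]
  have hAPPcard : APP.card ≤ P.card := by
    apply Finset.card_le_card_of_injOn (fun a => a.1)
    · intro a ha
      exact (Finset.mem_filter.mp ha).2.1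
    · intro a ha b hb hab
      have hab' : a.1 = b.1 := hab
      have hma := Finset.mem_filter.mp ha
      have hmb := Finset.mem_filter.mp hb
      have h1 : R a.1 a.2 := hmemP2 a hma.1
      have h2 : R a.1 b.2 := by rw [hab']; exact hmemP2 b hmb.1
      exact Prod.ext hab' (hAPPinj a.1 a.2 b.2 hma.2.1 hma.2.2 hmb.2.2 h1 h2)
  set φ : Fin n × Fin n → Fin n × Fin n := fun a => if a.1 < a.2 then a else (a.2, a.1)
    with hphi
  set NPP := Finset.univ.filter
    (fun p : Fin n × Fin n => p.1 < p.2 ∧ ¬(p.1 ∈ P ∧ p.2 ∈ P)) with hNPPdef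
  have hARne : ∀ a : Fin n × Fin n, a ∈ AR → a.1 ≠ a.2 := by
    intro a ha h
    obtain ⟨haA, hnp⟩ := Finset.mem_filter.mp ha
    have hloop : R a.1 a.1 := by
      have := hmemP2 a haA; rwa [← h] at this
    have hmem : a.1 ∈ P := (hPmem _).mpr ⟨a.1, hloop, hloop⟩
    exact hnp ⟨hmem, h ▸ hmem⟩
  have hmapsto : ∀ a ∈ AR, φ a ∈ NPP := by
    intro a ha
    obtain ⟨haA, hnp⟩ := Finset.mem_filter.mp ha
    have hne := hARne a ha
    rw [hNPPdef, Finset.mem_filter]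
    refine ⟨Finset.mem_univ _, ?_⟩
    by_cases hlt : a.1 < a.2
    · rw [hphi]
      simp only
      rw [if_pos hlt]
      exact ⟨hlt, hnp⟩
    · have hgt : a.2 < a.1 := lt_of_le_of_ne (not_lt.mp hlt) (Ne.symm hne)
      rw [hphi]
      simp only
      rw [if_neg hlt]
      exact ⟨hgt, fun hh => hnp ⟨hh.2, hh.1⟩⟩
  have hinjOn : Set.InjOn φ AR := by
    intro a ha b hb hab
    have haA := (Finset.mem_filter.mp ha).1
    have hbA := (Finset.mem_filter.mp hb).1
    have hnpa := (Finset.mem_filter.mp ha).2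
    have hnpb := (Finset.mem_filter.mp hb).2
    rw [hphi] at hab
    simp only at hab
    by_cases h1 : a.1 < a.2 <;> by_cases h2 : b.1 < b.2 <;>
      simp only [h1, h2, if_true, if_false] at hab
    · exact hab
    · -- a = (b.2, b.1) : digon
      exfalso
      have hb21 : R b.2 b.1 := by
        have := hmemP2 a haA
        rw [hab] at this; exact this
      have hb12 : R b.1 b.2 := hmemP2 b hbA
      exact hnpb ⟨(hPmem _).mpr ⟨b.2, hb12, hb21⟩, (hPmem _).mpr ⟨b.1, hb21, hb12⟩⟩
    · exfalso
      have ha21 : R a.2 a.1 := by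
        have := hmemP2 b hbA
        rw [← hab] at this; exact this
      have ha12 : R a.1 a.2 := hmemP2 a haA
      exact hnpa ⟨(hPmem _).mpr ⟨a.2, ha12, ha21⟩, (hPmem _).mpr ⟨a.1, ha21, ha12⟩⟩
    · -- (a.2,a.1) = (b.2,b.1)
      have e1 : a.2 = b.2 := congrArg Prod.fst hab
      have e2 : a.1 = b.1 := congrArg Prod.snd hab
      exact Prod.ext e2 e1
  have hARcard : AR.card ≤ NPP.card :=
    Finset.card_le_card_of_injOn φ hmapsto hinjOn
  have hNPPcard : NPP.card + (P.card).choose 2 = n.choose 2 := by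
    have h2 := card_pairs (n := n) P
    have h1 := card_pairs (n := n) (Finset.univ : Finset (Fin n))
    have huniv : ((Finset.univ : Finset (Fin n × Fin n)).filter
        (fun p => p.1 < p.2 ∧ p.1 ∈ (Finset.univ : Finset (Fin n))
          ∧ p.2 ∈ (Finset.univ : Finset (Fin n))))
        = (Finset.univ : Finset (Fin n × Fin n)).filter (fun p => p.1 < p.2) := by
      apply Finset.filter_congr; intro p _; simp
    rw [huniv] at h1
    have hcardU : (Finset.univ : Finset (Fin n)).card = n := by simp
    rw [hcardU] at h1
    have hsplit2 := Finset.card_filter_add_card_filter_not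
      (s := (Finset.univ : Finset (Fin n × Fin n)).filter (fun p => p.1 < p.2))
      (p := fun p => p.1 ∈ P ∧ p.2 ∈ P)
    have e1 : ((Finset.univ : Finset (Fin n × Fin n)).filter (fun p => p.1 < p.2)).filter
        (fun p => p.1 ∈ P ∧ p.2 ∈ P)
        = (Finset.univ : Finset (Fin n × Fin n)).filter
          (fun p => p.1 < p.2 ∧ p.1 ∈ P ∧ p.2 ∈ P) := by
      rw [Finset.filter_filter]
    have e2 : ((Finset.univ : Finset (Fin n × Fin n)).filter (fun p => p.1 < p.2)).filter
        (fun p => ¬(p.1 ∈ P ∧ p.2 ∈ P)) = NPP := by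
      rw [Finset.filter_filter, hNPPdef]
    rw [e1, e2, h2] at hsplit2
    omega
  have hPn : P.card ≤ n := by
    have := Finset.card_le_univ P
    simpa using this
  have hPC2 : P.card.choose 2 ≤ n.choose 2 := Nat.choose_le_choose 2 hPn
  have hkey : P.card.choose 2 + 1 ≤ P.card := by omega
  have hPsmall : P.card ≤ 2 := by
    by_contra h3
    have h3' : 3 ≤ P.card := by omega
    have hmul : 2*P.card ≤ P.card * (P.card - 1) := by
      calc 2*P.card = P.card * 2 := by ring
        _ ≤ P.card * (P.card - 1) := Nat.mul_le_mul_left _ (by omega)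
    rw [Nat.choose_two_right] at hkey
    omega
  have hP1 : 1 ≤ P.card := by
    rcases Nat.eq_zero_or_pos P.card with h0 | h
    · rw [h0] at hkey; simp at hkey
    · exact h
  have hpcC2 : P.card.choose 2 = P.card - 1 := by
    have : P.card = 1 ∨ P.card = 2 := by omega
    rcases this with h | h <;> rw [h] <;> rfl
  have hfull : NPP.card ≤ AR.card := by omega
  have himg : AR.image φ = NPP := by
    apply Finset.eq_of_subset_of_card_le
    · intro x hx
      obtain ⟨a, ha, rfl⟩ := Finset.mem_image.mp hx
      exact hmapsto a ha
    · rw [Finset.card_image_of_injOn hinjOn]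
      omega
  have hadjfull : ∀ x y : Fin n, x ≠ y → ¬(x ∈ P ∧ y ∈ P) → R x y ∨ R y x := by
    have h : ∀ x y : Fin n, x < y → ¬(x ∈ P ∧ y ∈ P) → R x y ∨ R y x := by
      intro x y hlt hnp
      have hmem : (x, y) ∈ NPP := by
        rw [hNPPdef, Finset.mem_filter]
        exact ⟨Finset.mem_univ _, hlt, hnp⟩
      rw [← himg] at hmem
      obtain ⟨a, haAR, hphia⟩ := Finset.mem_image.mp hmem
      have haA : a ∈ A := (Finset.mem_filter.mp haAR).1
      rw [hphi] at hphia
      simp only at hphia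
      by_cases h1 : a.1 < a.2
      · rw [if_pos h1] at hphia
        left
        have := hmemP2 a haA
        rw [hphia] at this
        exact this
      · rw [if_neg h1] at hphia
        right
        have := hmemP2 a haA
        have e1 : a.2 = x := congrArg Prod.fst hphia
        have e2 : a.1 = y := congrArg Prod.snd hphia
        rw [e1, e2] at this
        exact this
    intro x y hxy hnp
    rcases lt_or_gt_of_ne hxy with h' | h'
    · exact h x y h' hnp
    · exact (h y x h' (fun hh => hnp ⟨hh.2, hh.1⟩)).symm
  -- side cardinality helper
  have hcards : ∀ (E : Finset (Fin n)) (a0 : Fin n),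
      (∀ z, z ∉ E → z ∉ P) → a0 ∈ P →
      (Finset.univ.filter (fun z => z ∉ E ∧ R z a0)).card
        + (Finset.univ.filter (fun z => z ∉ E ∧ R a0 z)).card = n - E.card := by
    intro E a0 hEP ha0P
    have hdis : Disjoint (Finset.univ.filter (fun z => z ∉ E ∧ R z a0))
        (Finset.univ.filter (fun z => z ∉ E ∧ R a0 z)) := by
      rw [Finset.disjoint_left]
      intro z h1 h2
      simp only [Finset.mem_filter, Finset.mem_univ, true_and] at h1 h2
      exact hEP z h1.1 ((hPmem z).mpr ⟨a0, h1.2, h2.2⟩)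
    have hun : (Finset.univ.filter (fun z => z ∉ E ∧ R z a0))
        ∪ (Finset.univ.filter (fun z => z ∉ E ∧ R a0 z)) = Finset.univ \ E := by
      ext z
      simp only [Finset.mem_union, Finset.mem_filter, Finset.mem_univ, true_and,
        Finset.mem_sdiff]
      constructor
      · rintro (⟨h1, _⟩ | ⟨h1, _⟩) <;> exact h1
      · intro hz
        have hzP := hEP z hz
        have hne : z ≠ a0 := by rintro rfl; exact hzP ha0P
        rcases hadjfull z a0 hne (fun hh => hzP hh.1) with h | h
        · exact Or.inl ⟨hz, h⟩
        · exact Or.inr ⟨hz, h⟩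
    have hcu := Finset.card_union_of_disjoint hdis
    rw [hun] at hcu
    have hsd : (Finset.univ \ E).card = n - E.card := by
      rw [Finset.card_sdiff_of_subset (Finset.subset_univ E)]
      simp
    omega
  -- now split on the structure of P
  have hPcases : P.card = 1 ∨ P.card = 2 := by omega
  rcases hPcases with hpc | hpc
  · -- a single loop
    obtain ⟨u, hu⟩ := Finset.card_eq_one.mp hpc
    have huP : u ∈ P := by rw [hu]; exact Finset.mem_singleton_self u
    obtain ⟨x, hux, hxu⟩ := (hPmem u).mp huP
    have hxP : x ∈ P := (hPmem x).mpr ⟨u, hxu, hux⟩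
    rw [hu, Finset.mem_singleton] at hxP
    rw [hxP] at hux hxu
    -- loop : R u u
    have hEP : ∀ z, z ∉ ({u} : Finset (Fin n)) → z ∉ P := by
      intro z hz hP'
      rw [hu, Finset.mem_singleton] at hP'
      exact hz (by rw [hP']; exact Finset.mem_singleton_self u)
    refine final ht hk1 hk9 hnw u u
      (Finset.univ.filter (fun z => z ∉ ({u} : Finset (Fin n)) ∧ R z u))
      (Finset.univ.filter (fun z => z ∉ ({u} : Finset (Fin n)) ∧ R u z))
      hux hux ?_ ?_ ?_ ?_ ?_ ?_ ?_ ?_ ?_ ?_ ?_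
    · intro h
      simp only [Finset.mem_filter, Finset.mem_singleton] at h
      exact h.2.1 trivial
    · intro h
      simp only [Finset.mem_filter, Finset.mem_singleton] at h
      exact h.2.1 trivial
    · intro h
      simp only [Finset.mem_filter, Finset.mem_singleton] at h
      exact h.2.1 trivial
    · intro z hz
      simp only [Finset.mem_filter, Finset.mem_singleton] at hz
      exact ⟨hz.2.2, hz.2.2⟩
    · intro z hz
      simp only [Finset.mem_filter, Finset.mem_singleton] at hz
      exact ⟨hz.2.2, hz.2.2⟩
    · intro y hy z hz hne
      simp only [Finset.mem_filter, Finset.mem_singleton] at hy hz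
      exact hadjfull y z hne (fun hh => hEP y (by simpa using hy.2.1) hh.1)
    · intro y hy z hz hne
      simp only [Finset.mem_filter, Finset.mem_singleton] at hy hz
      exact hadjfull y z hne (fun hh => hEP y (by simpa using hy.2.1) hh.1)
    · intro z hz hzz
      simp only [Finset.mem_filter, Finset.mem_singleton] at hz
      exact hEP z (by simpa using hz.2.1) ((hPmem z).mpr ⟨z, hzz, hzz⟩)
    · intro z hz hzz
      simp only [Finset.mem_filter, Finset.mem_singleton] at hz
      exact hEP z (by simpa using hz.2.1) ((hPmem z).mpr ⟨z, hzz, hzz⟩)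
    · have := hcards {u} u hEP huP
      have hcu : ({u} : Finset (Fin n)).card = 1 := Finset.card_singleton u
      omega
    · have := hcards {u} u hEP huP
      have hcu : ({u} : Finset (Fin n)).card = 1 := Finset.card_singleton u
      omega
  · -- two partnered vertices
    obtain ⟨v, w, hvw, hPvw⟩ := Finset.card_eq_two.mp hpc
    have hvP : v ∈ P := by rw [hPvw]; simp
    have hwP : w ∈ P := by rw [hPvw]; simp
    have hEP : ∀ z, z ∉ ({v, w} : Finset (Fin n)) → z ∉ P := by
      intro z hz hP'
      rw [hPvw] at hP'
      exact hz hP'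
    have hE2 : ({v, w} : Finset (Fin n)).card = 2 := Finset.card_pair hvw
    obtain ⟨pv, hvp, hpv⟩ := (hPmem v).mp hvP
    have hpvP : pv ∈ P := (hPmem pv).mpr ⟨v, hpv, hvp⟩
    rw [hPvw, Finset.mem_insert, Finset.mem_singleton] at hpvP
    -- helper to run `final` in the two-element case, given anchor a0 with partner p0
    have hrun : ∀ a0 p0 : Fin n, a0 ∈ ({v,w} : Finset (Fin n)) →
        p0 ∈ ({v,w} : Finset (Fin n)) → a0 ∈ P →
        R a0 p0 → R p0 a0 →
        (∀ z, z ∉ ({v,w} : Finset (Fin n)) → R z a0 → R z p0) →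
        (∀ z, z ∉ ({v,w} : Finset (Fin n)) → R a0 z → R p0 z) → False := by
      intro a0 p0 ha0 hp0 ha0P hap hpa hInlift hOutlift
      refine final ht hk1 hk9 hnw a0 p0
        (Finset.univ.filter (fun z => z ∉ ({v,w} : Finset (Fin n)) ∧ R z a0))
        (Finset.univ.filter (fun z => z ∉ ({v,w} : Finset (Fin n)) ∧ R a0 z))
        hap hpa ?_ ?_ ?_ ?_ ?_ ?_ ?_ ?_ ?_ ?_ ?_
      · intro h
        simp only [Finset.mem_filter] at h
        exact h.2.1 ha0
      · intro h
        simp only [Finset.mem_filter] at h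
        exact h.2.1 ha0
      · intro h
        simp only [Finset.mem_filter] at h
        exact h.2.1 hp0
      · intro z hz
        simp only [Finset.mem_filter] at hz
        exact ⟨hz.2.2, hInlift z hz.2.1 hz.2.2⟩
      · intro z hz
        simp only [Finset.mem_filter] at hz
        exact ⟨hz.2.2, hOutlift z hz.2.1 hz.2.2⟩
      · intro y hy z hz hne
        simp only [Finset.mem_filter] at hy hz
        exact hadjfull y z hne (fun hh => hEP y hy.2.1 hh.1)
      · intro y hy z hz hne
        simp only [Finset.mem_filter] at hy hz
        exact hadjfull y z hne (fun hh => hEP y hy.2.1 hh.1)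
      · intro z hz hzz
        simp only [Finset.mem_filter] at hz
        exact hEP z hz.2.1 ((hPmem z).mpr ⟨z, hzz, hzz⟩)
      · intro z hz hzz
        simp only [Finset.mem_filter] at hz
        exact hEP z hz.2.1 ((hPmem z).mpr ⟨z, hzz, hzz⟩)
      · have := hcards {v, w} a0 hEP ha0P
        omega
      · have := hcards {v, w} a0 hEP ha0P
        omega
    rcases hpvP with hloopv | hdigon
    · -- pv = v : loop at v
      rw [hloopv] at hvp hpv
      exact hrun v v (by simp) (by simp) hvP hvp hvp
        (fun z hz h => h) (fun z hz h => h)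
    · -- digon v ↔ w
      rw [hdigon] at hvp hpv
      refine hrun v w (by simp) (by simp) hvP hvp hpv ?_ ?_
      · intro z hz h
        have hzw : z ≠ w := by
          intro he; exact hz (by rw [he]; simp)
        rcases hadjfull z w hzw (fun hh => hEP z hz hh.1) with h' | h'
        · exact h'
        · exact absurd (hno3 w v z v hpv hvp h' h hvp) hvw
      · intro z hz h
        have hzw : z ≠ w := by
          intro he; exact hz (by rw [he]; simp)
        rcases hadjfull z w hzw (fun hh => hEP z hz hh.1) with h' | h'
        · exact absurd (hno3 v w z w hvp hpv h h' hpv) hvw.symm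
        · exact h'


lemma tour_card {n : ℕ} :
    ((Finset.univ : Finset (Fin n × Fin n)).filter (fun a => a.1 < a.2)).card
      = n * (n-1) / 2 := by
  classical
  have h1 := card_pairs (n := n) (Finset.univ : Finset (Fin n))
  have huniv : ((Finset.univ : Finset (Fin n × Fin n)).filter
      (fun p => p.1 < p.2 ∧ p.1 ∈ (Finset.univ : Finset (Fin n))
        ∧ p.2 ∈ (Finset.univ : Finset (Fin n))))
      = (Finset.univ : Finset (Fin n × Fin n)).filter (fun p => p.1 < p.2) := by
    apply Finset.filter_congr; intro p _; simp
  rw [huniv] at h1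
  rw [h1]
  rw [Nat.choose_two_right]
  simp

lemma lower {n k t : ℕ} (ht : 1 ≤ t) (hn : 1 ≤ n) (hkn : n - 1 ≤ k) :
    ∃ A : Finset (Fin n × Fin n), Free n k t A ∧ A.card = n * (n-1) / 2 := by
  classical
  refine ⟨Finset.univ.filter (fun a : Fin n × Fin n => a.1 < a.2), ?_, tour_card⟩
  rintro u v ⟨f, hinj, hwalk⟩
  have h01 : (0 : Fin (t+1)) ≠ ⟨1, by omega⟩ := by
    intro h
    have := congrArg Fin.val h
    simp at this
  have hfne : f 0 ≠ f ⟨1, by omega⟩ := fun h => h01 (hinj h)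
  have hmono : ∀ i : Fin (t+1), StrictMono (f i) := by
    intro i
    rw [Fin.strictMono_iff_lt_succ]
    intro j
    have := (hwalk i).1 j
    simpa using this
  have hle : k + 1 ≤ n := by
    have := Fintype.card_le_of_injective (f 0) (hmono 0).injective
    simpa using this
  have he : n = k + 1 := by omega
  subst he
  have iwf : WellFoundedLT (Fin (k+1)) := inferInstance
  have hid : ∀ g : Fin (k+1) → Fin (k+1), StrictMono g → ∀ j, g j = j := by
    intro g hg j
    have h1 : j ≤ g j := @StrictMono.le_apply (Fin (k+1)) _ iwf g hg j
    have hg' : StrictMono (fun x : Fin (k+1) => (g x.rev).rev) := by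
      intro x y hxy
      have h' : y.rev < x.rev := Fin.rev_lt_rev.mpr hxy
      exact Fin.rev_lt_rev.mpr (hg h')
    have h2 : ∀ x : Fin (k+1), x ≤ (g x.rev).rev := fun x =>
      @StrictMono.le_apply (Fin (k+1)) _ iwf _ hg' x
    have h3 : g j ≤ j := by
      have hh := h2 j.rev
      rw [Fin.rev_rev] at hh
      exact Fin.rev_le_rev.mp hh
    exact le_antisymm h3 h1
  apply hfne
  funext j
  rw [hid _ (hmono 0) j, hid _ (hmono _) j]


end Stmt10Aux

open Stmt10Aux in
/-- For `k ≥ n-1 ≥ max{2t+1, 2⌈√(2t+9/4)+1/2⌉+3}`, the maximum size of an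
`F_{k,t+1}`-free digraph on `n` vertices is `n(n-1)/2`. -/
theorem stmt_10 (n k t : ℕ) (ht : 1 ≤ t)
    (h1 : 2 * t + 1 ≤ n - 1)
    (h2 : (2 * ⌈Real.sqrt (2 * (t : ℝ) + 9/4) + 1/2⌉ + 3 : ℤ) ≤ (n : ℤ) - 1)
    (hk : n - 1 ≤ k) :
    IsGreatest {s : ℕ | ∃ A : Finset (Fin n × Fin n), Free n k t A ∧ A.card = s}
      (n * (n - 1) / 2) := by
  have hn10 : 10 ≤ n := by
    have hs : (2 : ℝ) ≤ Real.sqrt (2 * (t : ℝ) + 9/4) := by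
      rw [Real.le_sqrt' (by norm_num)]
      have : (1 : ℝ) ≤ (t : ℝ) := by exact_mod_cast ht
      nlinarith
    have h2x : (2 : ℝ) < Real.sqrt (2 * (t : ℝ) + 9/4) + 1/2 := by linarith
    have h3 : (2 : ℤ) < ⌈Real.sqrt (2 * (t : ℝ) + 9/4) + 1/2⌉ := by
      apply Int.lt_ceil.mpr
      exact_mod_cast h2x
    have h4 : (10 : ℤ) ≤ (n : ℤ) := by linarith
    exact_mod_cast h4
  have hn2 : 2*t+2 ≤ n := by omega
  have hk9 : 9 ≤ k := by omega
  have hk1 : 2*t+1 ≤ k := by omega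
  constructor
  · obtain ⟨A, hF, hc⟩ := lower (t := t) (k := k) ht (by omega) hk
    exact ⟨A, hF, hc⟩
  · rintro s ⟨A, hF, rfl⟩
    exact upper ht hn2 hn10 hk1 hk9 A hF
end

section
/- In any digraph D in which some vertex v has a loop and lies on a 2-cycle, for every k ≥ 2⌈log₂(t+1)⌉ there exist at least t+1 distinct closed walks of length k from v to v. -/
/-- If a vertex `v` lies on a loop and on a 2-cycle, then for every
`k ≥ 2⌈log₂(t+1)⌉` there are at least `t+1` distinct closed walks of length `k`
at `v`. -/
theorem stmt_15 {V : Type*} (A : V → V → Prop) (t : ℕ) (ht : 1 ≤ t)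
    (v u : V) (huv : u ≠ v) (hloop : A v v) (h2 : A v u ∧ A u v)
    (k : ℕ) (hk : 2 * Nat.clog 2 (t+1) ≤ k) :
    HasWalks A k (t+1) v v := by
  obtain ⟨hvu, huv'⟩ := h2
  set n := k / 2 with hn
  have hclog : Nat.clog 2 (t+1) ≤ n := Nat.le_div_iff_mul_le (by norm_num) |>.mpr
    (by omega)
  have hpow : t + 1 ≤ 2 ^ n :=
    le_trans (Nat.le_pow_clog one_lt_two _) (Nat.pow_le_pow_right (by norm_num) hclog)
  have h2n : 2 * n ≤ k := Nat.mul_div_le k 2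
  refine ⟨fun m j => if j.val % 2 = 1 ∧ j.val < 2*n ∧ Nat.testBit m.val (j.val/2)
      then u else v, ?_, ?_⟩
  · intro m m' hmm
    have hb : ∀ p, Nat.testBit m.val p = Nat.testBit m'.val p := by
      intro p
      by_cases hp : p < n
      · have hj : 2*p+1 < k+1 := by omega
        have := congrFun hmm ⟨2*p+1, hj⟩
        simp only at this
        have hcond : (2*p+1) % 2 = 1 ∧ 2*p+1 < 2*n ∧ True := ⟨by omega, by omega, trivial⟩
        have hdiv : (2*p+1)/2 = p := by omega
        rw [hdiv] at this
        by_cases hm : Nat.testBit m.val p <;> by_cases hm' : Nat.testBit m'.val p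
        · rw [hm, hm']
        · simp [hm, hm', hcond.1, hcond.2.1] at this; exact absurd this huv
        · simp [hm, hm', hcond.1, hcond.2.1] at this; exact absurd this.symm huv
        · simp only [Bool.not_eq_true] at hm hm'; rw [hm, hm']
      · have h1 : m.val < 2 ^ p := lt_of_lt_of_le m.isLt
          (le_trans hpow (Nat.pow_le_pow_right (by norm_num) (by omega)))
        have h2 : m'.val < 2 ^ p := lt_of_lt_of_le m'.isLt
          (le_trans hpow (Nat.pow_le_pow_right (by norm_num) (by omega)))
        rw [Nat.testBit_lt_two_pow h1, Nat.testBit_lt_two_pow h2]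
    exact Fin.ext (Nat.eq_of_testBit_eq hb)
  · intro m
    refine ⟨?_, ?_, ?_⟩
    · intro i
      simp only [Fin.coe_castSucc, Fin.val_succ]
      by_cases hA : i.val % 2 = 1 ∧ i.val < 2*n ∧ Nat.testBit m.val (i.val/2)
      · have hB : ¬((i.val+1) % 2 = 1 ∧ i.val+1 < 2*n ∧ Nat.testBit m.val ((i.val+1)/2)) := by
          rintro ⟨h1, -, -⟩; omega
        simp only [if_pos hA, if_neg hB]; exact huv'
      · by_cases hB : (i.val+1) % 2 = 1 ∧ i.val+1 < 2*n ∧ Nat.testBit m.val ((i.val+1)/2)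
        · simp only [if_neg hA, if_pos hB]; exact hvu
        · simp only [if_neg hA, if_neg hB]; exact hloop
    · simp
    · have : ¬((Fin.last k).val % 2 = 1 ∧ (Fin.last k).val < 2*n ∧
          Nat.testBit m.val ((Fin.last k).val/2)) := by
        rintro ⟨-, h, -⟩; simp [Fin.last] at h; omega
      simp only [if_neg this]
end

section
/- Let D be a digraph containing a cycle C = w₁→w₂→⋯→w_l→w₁ and a 3-cycle C₁ = u₁→u₂→u₃→u₁ vertex-disjoint from C, such that w_i → u_j for all i ∈ {1,...,l} and j ∈ {1,2,3}. Then for every k ≥ t+1 there are at least t+1 distinct walks of length k from w₁ to u₁. -/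
/-!
Unroll `C` and `C₁` into infinite walks `p` and `q`, shifting `q` so that it sits at `u₁`
at time `k`. For `j = 0, …, t` the walk that follows `p` for `j` steps and then jumps to `q`
uses the arcs from `C` to `C₁`; these walks are pairwise distinct because `C` and `C₁` are
disjoint, so they already differ at the first time one of them has jumped and the other has not.
-/

section Walks

variable {V : Type*} {A : V → V → Prop}

section Unroll

def unroll {m : ℕ} (c : Fin (m+1) → V) (hm : 0 < m) (n : ℕ) : V :=
  c ⟨n % m, Nat.lt_succ_of_lt (Nat.mod_lt n hm)⟩

variable {m : ℕ} {c : Fin (m+1) → V} {hm : 0 < m}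

theorem unroll_eq_zero_of_mod_eq_zero {n : ℕ} (hn : n % m = 0) : unroll c hm n = c 0 := by
  simp only [unroll, hn]
  rfl

theorem IsWalk.unroll_adj (hc : IsWalk A c) (hclose : c (Fin.last m) = c 0) (n : ℕ) :
    A (unroll c hm n) (unroll c hm (n+1)) := by
  have hstep := hc ⟨n % m, Nat.mod_lt n hm⟩
  rcases Nat.lt_or_ge (n % m + 1) m with hlt | hge
  · have hsucc : (n + 1) % m = n % m + 1 := by
      rw [← Nat.mod_add_mod, Nat.mod_eq_of_lt hlt]
    simpa [unroll, hsucc, Fin.castSucc, Fin.succ] using hstep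
  · have hwrap : n % m + 1 = m := by have := Nat.mod_lt n hm; omega
    have hsucc : (n + 1) % m = 0 := by rw [← Nat.mod_add_mod, hwrap, Nat.mod_self]
    have hlast : (⟨n % m, Nat.mod_lt n hm⟩ : Fin m).succ = Fin.last m := Fin.ext hwrap
    rw [hlast, hclose] at hstep
    simpa [unroll, hsucc] using hstep

end Unroll

section Splice

def splice (p q : ℕ → V) (j n : ℕ) : V :=
  if n ≤ j then p n else q n

variable {p q : ℕ → V}

theorem splice_adj (hp : ∀ n, A (p n) (p (n+1))) (hq : ∀ n, A (q n) (q (n+1)))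
    (hpq : ∀ n, A (p n) (q (n+1))) (j n : ℕ) :
    A (splice p q j n) (splice p q j (n+1)) := by
  unfold splice
  by_cases hn : n + 1 ≤ j
  · simpa [hn, show n ≤ j by omega] using hp n
  by_cases hn' : n ≤ j
  · simpa [hn, hn'] using hpq n
  · simpa [hn, hn'] using hq n

theorem splice_succ_ne (hne : ∀ n, p n ≠ q n) {j j' : ℕ} (hjj' : j < j') :
    splice p q j (j+1) ≠ splice p q j' (j+1) := by
  simpa [splice, show j + 1 ≤ j' by omega] using (hne (j+1)).symm

theorem hasWalks_of_splice (hp : ∀ n, A (p n) (p (n+1))) (hq : ∀ n, A (q n) (q (n+1)))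
    (hpq : ∀ n, A (p n) (q (n+1))) (hne : ∀ n, p n ≠ q n) {k s : ℕ} (hs : s ≤ k) :
    HasWalks A k s (p 0) (q k) := by
  refine ⟨fun j i => splice p q j i, ?_, fun j => ⟨fun i => ?_, ?_, ?_⟩⟩
  · intro j j' h
    have hrestrict : ∀ {a b : Fin s}, a < b →
        (fun i : Fin (k+1) => splice p q a i) ≠ fun i : Fin (k+1) => splice p q b i :=
      fun {a _} hab h => splice_succ_ne hne hab (congrFun h ⟨a + 1, by omega⟩)
    rcases lt_trichotomy j j' with hlt | heq | hgt
    exacts [absurd h (hrestrict hlt), heq, absurd h.symm (hrestrict hgt)]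
  · exact splice_adj hp hq hpq j i
  · simp [splice]
  · simp [splice, show ¬ k ≤ j by omega]

end Splice

theorem forall_fin_four_triangle {P : V → Prop} {u₁ u₂ u₃ : V}
    (h₁ : P u₁) (h₂ : P u₂) (h₃ : P u₃) (j : Fin 4) :
    P (![u₁, u₂, u₃, u₁] j) := by
  fin_cases j <;> assumption

end Walks

theorem stmt_16_general {V : Type*} (A : V → V → Prop) (t l : ℕ)
    (c : Fin (l+1) → V) (hc : IsCycle A l c)
    (u₁ u₂ u₃ : V) (h3 : A u₁ u₂ ∧ A u₂ u₃ ∧ A u₃ u₁)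
    (hdisj : ∀ i, c i ≠ u₁ ∧ c i ≠ u₂ ∧ c i ≠ u₃)
    (harc : ∀ i, A (c i) u₁ ∧ A (c i) u₂ ∧ A (c i) u₃)
    (k : ℕ) (hk : t + 1 ≤ k) :
    HasWalks A k (t+1) (c 0) u₁ := by
  obtain ⟨hl, hwalk, hclose, -⟩ := hc
  set tri : Fin 4 → V := ![u₁, u₂, u₃, u₁]
  have htri : IsWalk A tri := by
    intro i
    fin_cases i
    exacts [h3.1, h3.2.1, h3.2.2]
  obtain ⟨a, ha⟩ : ∃ a, (k + a) % 3 = 0 := ⟨3 - k % 3, by omega⟩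
  have hwalks := hasWalks_of_splice (p := unroll c hl) (q := fun n => unroll tri three_pos (n + a))
    (hwalk.unroll_adj hclose)
    (fun n => by rw [Nat.add_right_comm]; exact htri.unroll_adj rfl (n + a))
    (fun _ => forall_fin_four_triangle (harc _).1 (harc _).2.1 (harc _).2.2 _)
    (fun _ => forall_fin_four_triangle (hdisj _).1 (hdisj _).2.1 (hdisj _).2.2 _) hk
  rwa [unroll_eq_zero_of_mod_eq_zero (Nat.zero_mod l),
    unroll_eq_zero_of_mod_eq_zero ha] at hwalks

/-- A cycle `C` with all its vertices dominating a disjoint 3-cycle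
`u₁ → u₂ → u₃ → u₁` yields `t+1` distinct walks of every length `k ≥ t+1`
from the first vertex of `C` to `u₁`. -/
theorem stmt_16 {V : Type*} (A : V → V → Prop) (t l : ℕ) (ht : 1 ≤ t)
    (c : Fin (l+1) → V) (hc : IsCycle A l c)
    (u₁ u₂ u₃ : V) (h3 : A u₁ u₂ ∧ A u₂ u₃ ∧ A u₃ u₁)
    (hdistinct : u₁ ≠ u₂ ∧ u₂ ≠ u₃ ∧ u₁ ≠ u₃)
    (hdisj : ∀ i, c i ≠ u₁ ∧ c i ≠ u₂ ∧ c i ≠ u₃)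
    (harc : ∀ i, A (c i) u₁ ∧ A (c i) u₂ ∧ A (c i) u₃)
    (k : ℕ) (hk : t + 1 ≤ k) :
    HasWalks A k (t+1) (c 0) u₁ :=
  stmt_16_general A t l c hc u₁ u₂ u₃ h3 hdisj harc k hk
end
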